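/- arXiv:1606.01985 — 6 statements merged into one kernel-verified Lean document; each statement's English description precedes it below -/
import Mathlib

section
/- Converse part of Theorem 1: for the additive-noise two-way channel with stationary ergodic noise processes Z1 and Z2 that are independent of each other and of the messages, every achievable rate pair (R1, R2) satisfies R1 ≤ log q − H̄(Z2) and R2 ≤ log q − H̄(Z1), where H̄(Zj) = lim_{n→∞} H(Z_j^n)/n. -/
open MeasureTheory ProbabilityTheory Real Filter Topology
open scoped ENNReal

noncomputable section

/-- Shannon entropy (in the same base as `Real.log`) of a finitely-valued random variable. -/
def Hent {Ω S : Type*} [MeasurableSpace Ω] [Fintype S] (μ : Measure Ω) (X : Ω → S) : ℝ :=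
  ∑ s : S, Real.negMulLog ((μ (X ⁻¹' {s})).toReal)

/-- An (n, M1, M2) code for the two-way channel: at time `i` the encoder of user `j`
maps its message and the `i` previously received symbols to a channel input, and at
the end of transmission user `j` decodes the other user's message from its own
message and its `n` received symbols. -/
structure TWCode (q n M1 M2 : ℕ) where
  f1 : Fin M1 → (i : Fin n) → (Fin i.1 → ZMod q) → ZMod q
  f2 : Fin M2 → (i : Fin n) → (Fin i.1 → ZMod q) → ZMod q
  g1 : Fin M1 → (Fin n → ZMod q) → Fin M2
  g2 : Fin M2 → (Fin n → ZMod q) → Fin M1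

/-- The pair of channel inputs (X_{1,i}, X_{2,i}) produced by the adaptive encoders,
where user 1 sees past outputs Y_{1,j} = X_{1,j} + X_{2,j} + Z_{1,j} and user 2 sees
past outputs Y_{2,j} = X_{1,j} + X_{2,j} + Z_{2,j} (addition mod q). -/
def TWX {q n M1 M2 : ℕ} (C : TWCode q n M1 M2) (w1 : Fin M1) (w2 : Fin M2)
    (z1 z2 : Fin n → ZMod q) : (i : Fin n) → ZMod q × ZMod q
  | i =>
    (C.f1 w1 i (fun j =>
        have h : j.1 < n := j.2.trans i.2
        (TWX C w1 w2 z1 z2 ⟨j.1, h⟩).1 + (TWX C w1 w2 z1 z2 ⟨j.1, h⟩).2 + z1 ⟨j.1, h⟩),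
     C.f2 w2 i (fun j =>
        have h : j.1 < n := j.2.trans i.2
        (TWX C w1 w2 z1 z2 ⟨j.1, h⟩).1 + (TWX C w1 w2 z1 z2 ⟨j.1, h⟩).2 + z2 ⟨j.1, h⟩))
  termination_by i => i.1
  decreasing_by all_goals exact j.2

/-- Output sequence Y_1^n at user 1. -/
def TWY1 {q n M1 M2 : ℕ} (C : TWCode q n M1 M2) (w1 : Fin M1) (w2 : Fin M2)
    (z1 z2 : Fin n → ZMod q) (i : Fin n) : ZMod q :=
  (TWX C w1 w2 z1 z2 i).1 + (TWX C w1 w2 z1 z2 i).2 + z1 i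

/-- Output sequence Y_2^n at user 2. -/
def TWY2 {q n M1 M2 : ℕ} (C : TWCode q n M1 M2) (w1 : Fin M1) (w2 : Fin M2)
    (z1 z2 : Fin n → ZMod q) (i : Fin n) : ZMod q :=
  (TWX C w1 w2 z1 z2 i).1 + (TWX C w1 w2 z1 z2 i).2 + z2 i

/-- The uniform probability measure on a (nonempty) finite type. -/
def unif (α : Type*) [Fintype α] [MeasurableSpace α] : Measure α :=
  (Fintype.card α : ℝ≥0∞)⁻¹ • Measure.count

/-- Probability that user 1 decodes W2 incorrectly: the messages (W1, W2) are uniform on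
`Fin M1 × Fin M2` and independent of everything else (they live on a fresh product factor),
and the noise sequences are the first `n` letters of the processes Z1, Z2. -/
def twPe1 {Ω : Type*} [MeasurableSpace Ω] (μ : Measure Ω) {q : ℕ}
    (Z1 Z2 : Ω → ℕ → ZMod q) {n M1 M2 : ℕ} (C : TWCode q n M1 M2) : ℝ≥0∞ :=
  ((unif (Fin M1 × Fin M2)).prod μ)
    {p | C.g1 p.1.1 (TWY1 C p.1.1 p.1.2 (fun i => Z1 p.2 i) (fun i => Z2 p.2 i)) ≠ p.1.2}

/-- Probability that user 2 decodes W1 incorrectly. -/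
def twPe2 {Ω : Type*} [MeasurableSpace Ω] (μ : Measure Ω) {q : ℕ}
    (Z1 Z2 : Ω → ℕ → ZMod q) {n M1 M2 : ℕ} (C : TWCode q n M1 M2) : ℝ≥0∞ :=
  ((unif (Fin M1 × Fin M2)).prod μ)
    {p | C.g2 p.1.2 (TWY2 C p.1.1 p.1.2 (fun i => Z1 p.2 i) (fun i => Z2 p.2 i)) ≠ p.1.1}

/-- A rate pair (R1, R2) is achievable for the additive-noise two-way channel with noise
processes Z1, Z2 (defined on (Ω, μ)) if there is a sequence of (n, M1⁽ⁿ⁾, M2⁽ⁿ⁾) codes with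
(1/n) log Mj⁽ⁿ⁾ ≥ Rj for all n ≥ 1 and both error probabilities tending to 0. -/
def twAchievable {Ω : Type*} [MeasurableSpace Ω] (μ : Measure Ω) (q : ℕ)
    (Z1 Z2 : Ω → ℕ → ZMod q) (R1 R2 : ℝ) : Prop :=
  ∃ (M1 M2 : ℕ → ℕ) (C : (n : ℕ) → TWCode q n (M1 n) (M2 n)),
    (∀ n : ℕ, 1 ≤ n → 0 < M1 n ∧ 0 < M2 n ∧
      R1 ≤ Real.log (M1 n) / n ∧ R2 ≤ Real.log (M2 n) / n) ∧
    Tendsto (fun n => twPe1 μ Z1 Z2 (C n)) atTop (𝓝 0) ∧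
    Tendsto (fun n => twPe2 μ Z1 Z2 (C n)) atTop (𝓝 0)

/-- The shift map on one-sided sequences. -/
def shift {α : Type*} (f : ℕ → α) (i : ℕ) : α := f (i + 1)

/-!
Fano's inequality at each receiver. Given both messages and `Z₁ⁿ`, user 2's output `Y₂ⁿ` determines
`Z₂ⁿ`, so with `T = (W₂, Y₂ⁿ)`,
`H(Z₁ⁿ, W₁, T) = H(Z₁ⁿ, W₁, W₂, Z₂ⁿ) = H(Z₁ⁿ) + log M₁ + log M₂ + H(Z₂ⁿ)`.
Subadditivity, Fano's inequality for the decoder of `W₁` and `H(T) ≤ log M₂ + n log q` bound the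
left side by `H(Z₁ⁿ) + log M₂ + n log q + log 2 + P_e2 log M₁`, hence
`(1 - P_e2) log M₁ ≤ n log q + log 2 - H(Z₂ⁿ)`; divide by `n` and let `n → ∞`.
The bound on `R₂` is the same argument for the code with the two users exchanged.
-/

open Finset

namespace Real

lemma negMulLog_le_sub_sub_mul_log {p c : ℝ} (hp : 0 ≤ p) (hc : 0 < c) :
    negMulLog p ≤ c - p - p * log c := by
  have hsplit : negMulLog p = c * negMulLog (p / c) - p * log c := by
    conv_lhs => rw [← div_mul_cancel₀ p hc.ne', negMulLog_mul]
    rw [show negMulLog c = -c * log c from rfl]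
    field_simp
    ring
  have := negMulLog_le_one_sub_self (div_nonneg hp hc.le)
  rw [hsplit]
  have : c * negMulLog (p / c) ≤ c * (1 - p / c) := by gcongr
  rw [mul_one_sub, mul_div_cancel₀ p hc.ne'] at this
  linarith

lemma log_natCast_le_log_natCast {m n : ℕ} (h : m ≤ n) : log m ≤ log n := by
  rcases m.eq_zero_or_pos with rfl | hm
  · simpa using log_natCast_nonneg n
  · exact log_le_log (by exact_mod_cast hm) (by exact_mod_cast h)

lemma negMulLog_le_mul_sub_sub {r a b : ℝ} (hr : 0 ≤ r) (ha : r ≤ a) (hb : r ≤ b) :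
    negMulLog r ≤ a * b - r - r * log a - r * log b := by
  rcases hr.eq_or_lt with rfl | hr
  · simpa using mul_nonneg (hr.trans ha) (hr.trans hb)
  have := negMulLog_le_sub_sub_mul_log hr.le (mul_pos (hr.trans_le ha) (hr.trans_le hb))
  rwa [log_mul (hr.trans_le ha).ne' (hr.trans_le hb).ne', mul_add, ← sub_sub] at this

lemma sum_negMulLog_le {S : Type*} (t : Finset S) {p : S → ℝ} (hp : ∀ s ∈ t, 0 ≤ p s) :
    ∑ s ∈ t, negMulLog (p s) ≤ negMulLog (∑ s ∈ t, p s) + (∑ s ∈ t, p s) * log #t := by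
  set P := ∑ s ∈ t, p s
  rcases (sum_nonneg hp).eq_or_lt with hP | hP
  · have hzero := (sum_eq_zero_iff_of_nonneg hp).mp hP.symm
    rw [show P = 0 from hP.symm, sum_eq_zero fun s hs => by rw [hzero s hs, negMulLog_zero]]
    simp
  have hN : (0 : ℝ) < #t := by
    exact_mod_cast card_pos.mpr (nonempty_of_sum_ne_zero hP.ne')
  -- Gibbs' inequality against the uniform vector with the same total mass
  calc ∑ s ∈ t, negMulLog (p s)
      ≤ ∑ s ∈ t, (P / #t - p s - p s * log (P / #t)) :=
        sum_le_sum fun s hs => negMulLog_le_sub_sub_mul_log (hp s hs) (by positivity)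
    _ = negMulLog P + P * log #t := by
      rw [sum_sub_distrib, sum_sub_distrib, ← sum_mul, sum_const,
        nsmul_eq_mul, log_div hP.ne' hN.ne', negMulLog]
      field_simp
      ring

lemma sum_negMulLog_mul {A B : Type*} [Fintype A] [Fintype B] {p : A → ℝ} {q : B → ℝ}
    (hp : ∑ a, p a = 1) (hq : ∑ b, q b = 1) :
    ∑ x : A × B, negMulLog (p x.1 * q x.2) = ∑ a, negMulLog (p a) + ∑ b, negMulLog (q b) := by
  simp only [negMulLog_mul, Fintype.sum_prod_type, sum_add_distrib, ← sum_mul,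
    ← mul_sum, hp, hq, one_mul]

end Real

section Entropy

variable {Ω : Type*} [MeasurableSpace Ω] {ν : Measure Ω} {S T : Type*} [Fintype S] [Fintype T]

lemma Hent_eq_sum_measureReal (X : Ω → S) :
    Hent ν X = ∑ s, negMulLog (ν.real (X ⁻¹' {s})) := rfl

lemma Hent_comp_of_injective {φ : S → T} (hφ : Function.Injective φ) (X : Ω → S) :
    Hent ν (fun ω => φ (X ω)) = Hent ν X := by
  refine (Fintype.sum_of_injective φ hφ _ _ (fun t ht => ?_) (fun s => ?_)).symm
  · have : (fun ω => φ (X ω)) ⁻¹' {t} = ∅ :=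
      Set.eq_empty_of_forall_notMem fun ω hω => ht ⟨X ω, hω⟩
    simp [this]
  · simp only [Set.preimage, Set.mem_singleton_iff, hφ.eq_iff]

variable [MeasurableSpace S] [MeasurableSingletonClass S]
  [MeasurableSpace T] [MeasurableSingletonClass T]

lemma sum_measureReal_preimage_singleton_inter [IsFiniteMeasure ν] {X : Ω → S}
    (hX : Measurable X) (A : Set Ω) :
    ∑ s, ν.real (X ⁻¹' {s} ∩ A) = ν.real A := by
  simp_rw [← measureReal_restrict_apply (hX (measurableSet_singleton _))]
  rw [sum_measureReal_preimage_singleton _ fun s _ => hX (measurableSet_singleton s)]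
  simp

lemma sum_measureReal_pair_preimage_left [IsFiniteMeasure ν] {β : Type*} {X : Ω → S}
    (hX : Measurable X) (Y : Ω → β) (b : β) :
    ∑ s, ν.real ((fun ω => (X ω, Y ω)) ⁻¹' {(s, b)}) = ν.real (Y ⁻¹' {b}) := by
  rw [← sum_measureReal_preimage_singleton_inter hX]
  congr! 2 with s
  ext ω
  simp

lemma sum_measureReal_pair_preimage_right [IsFiniteMeasure ν] {α : Type*} (X : Ω → α)
    {Y : Ω → T} (hY : Measurable Y) (a : α) :
    ∑ t, ν.real ((fun ω => (X ω, Y ω)) ⁻¹' {(a, t)}) = ν.real (X ⁻¹' {a}) := by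
  rw [← sum_measureReal_preimage_singleton_inter hY]
  congr! 2 with t
  ext ω
  simp [and_comm]

variable [IsProbabilityMeasure ν]

lemma sum_measureReal_preimage_singleton_eq_one {X : Ω → S} (hX : Measurable X) :
    ∑ s, ν.real (X ⁻¹' {s}) = 1 := by
  simpa using sum_measureReal_preimage_singleton_inter (ν := ν) hX Set.univ

lemma Hent_le_log_card {X : Ω → S} (hX : Measurable X) :
    Hent ν X ≤ log (Fintype.card S) := by
  rw [Hent_eq_sum_measureReal]
  simpa [sum_measureReal_preimage_singleton_eq_one hX] using
    Real.sum_negMulLog_le Finset.univ fun s _ => measureReal_nonneg (μ := ν) (s := X ⁻¹' {s})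

lemma Hent_pair_le {X : Ω → S} {Y : Ω → T} (hX : Measurable X) (hY : Measurable Y) :
    Hent ν (fun ω => (X ω, Y ω)) ≤ Hent ν X + Hent ν Y := by
  set r : S × T → ℝ := fun x => ν.real ((fun ω => (X ω, Y ω)) ⁻¹' {x})
  set a : S → ℝ := fun s => ν.real (X ⁻¹' {s})
  set b : T → ℝ := fun t => ν.real (Y ⁻¹' {t})
  have hra : ∀ s, ∑ t, r (s, t) = a s := sum_measureReal_pair_preimage_right X hY
  have hrb : ∀ t, ∑ s, r (s, t) = b t := sum_measureReal_pair_preimage_left hX Y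
  have hr1 : ∑ x, r x = 1 := sum_measureReal_preimage_singleton_eq_one (hX.prodMk hY)
  have ha1 : ∑ s, a s = 1 := sum_measureReal_preimage_singleton_eq_one hX
  have hb1 : ∑ t, b t = 1 := sum_measureReal_preimage_singleton_eq_one hY
  have hr_le_a : ∀ x : S × T, r x ≤ a x.1 := fun x => hra x.1 ▸
    single_le_sum (f := fun t => r (x.1, t)) (fun _ _ => measureReal_nonneg)
      (mem_univ x.2)
  have hr_le_b : ∀ x : S × T, r x ≤ b x.2 := fun x => hrb x.2 ▸
    single_le_sum (f := fun s => r (s, x.2)) (fun _ _ => measureReal_nonneg)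
      (mem_univ x.1)
  calc Hent ν (fun ω => (X ω, Y ω)) = ∑ x, negMulLog (r x) := rfl
    _ ≤ ∑ x : S × T, (a x.1 * b x.2 - r x - r x * log (a x.1) - r x * log (b x.2)) :=
      sum_le_sum fun x _ =>
        Real.negMulLog_le_mul_sub_sub measureReal_nonneg (hr_le_a x) (hr_le_b x)
    _ = Hent ν X + Hent ν Y := by
      have hab : ∑ x : S × T, a x.1 * b x.2 = 1 := by
        rw [Fintype.sum_prod_type, ← Fintype.sum_mul_sum, ha1, hb1, one_mul]
      have hra_log : ∑ x : S × T, r x * log (a x.1) = ∑ s, a s * log (a s) := by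
        simp only [Fintype.sum_prod_type, ← sum_mul, hra]
      have hrb_log : ∑ x : S × T, r x * log (b x.2) = ∑ t, b t * log (b t) := by
        simp only [Fintype.sum_prod_type_right, ← sum_mul, hrb]
      simp only [sum_sub_distrib, hab, hr1, hra_log, hrb_log, Hent_eq_sum_measureReal,
        negMulLog, neg_mul, sum_neg_distrib]
      ring

lemma _root_.ProbabilityTheory.IndepFun.Hent_pair {X : Ω → S} {Y : Ω → T}
    (hXY : IndepFun X Y ν) (hX : Measurable X) (hY : Measurable Y) :
    Hent ν (fun ω => (X ω, Y ω)) = Hent ν X + Hent ν Y := by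
  have hprod : ∀ x : S × T, ν.real ((fun ω => (X ω, Y ω)) ⁻¹' {x})
      = ν.real (X ⁻¹' {x.1}) * ν.real (Y ⁻¹' {x.2}) := by
    rintro ⟨s, t⟩
    rw [Measure.real, Measure.real, Measure.real, ← ENNReal.toReal_mul,
      ← hXY.measure_inter_preimage_eq_mul _ _ (measurableSet_singleton s)
        (measurableSet_singleton t)]
    congr 2
    ext ω
    simp
  rw [Hent_eq_sum_measureReal, Fintype.sum_congr _ _ fun x => congrArg _ (hprod x)]
  exact Real.sum_negMulLog_mul (sum_measureReal_preimage_singleton_eq_one hX)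
    (sum_measureReal_preimage_singleton_eq_one hY)

lemma Hent_le_Hent_comp_add {β : Type*} [Fintype β] [DecidableEq β] (f : S → β) {X : Ω → S}
    (hX : Measurable X) :
    Hent ν X ≤ Hent ν (fun ω => f (X ω)) +
      ∑ b, ν.real ((fun ω => f (X ω)) ⁻¹' {b}) * log #{s | f s = b} := by
  rw [Hent_eq_sum_measureReal, Hent_eq_sum_measureReal, ← sum_fiberwise univ f,
    ← sum_add_distrib]
  refine sum_le_sum fun b _ => ?_
  have hmass : ∑ s with f s = b, ν.real (X ⁻¹' {s}) = ν.real ((fun ω => f (X ω)) ⁻¹' {b}) := by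
    rw [sum_measureReal_preimage_singleton _ fun s _ => hX (measurableSet_singleton s)]
    congr 1
    ext ω
    simp
  rw [← hmass]
  exact Real.sum_negMulLog_le _ fun s _ => measureReal_nonneg

lemma Hent_pair_le_fano {X : Ω → S} {Y : Ω → T} (hX : Measurable X) (hY : Measurable Y)
    (g : T → S) :
    Hent ν (fun ω => (X ω, Y ω)) ≤
      Hent ν Y + log 2 + ν.real {ω | g (Y ω) ≠ X ω} * log (Fintype.card S) := by
  classical
  set E : Ω → Bool := fun ω => decide (g (Y ω) = X ω)
  set f : S × T → T × Bool := fun x => (x.2, decide (g x.2 = x.1))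
  have hE : Measurable E := (measurable_of_countable fun x : S × T => decide (g x.2 = x.1)).comp
    (hX.prodMk hY)
  have hYE : Hent ν (fun ω => (Y ω, E ω)) ≤ Hent ν Y + log 2 :=
    (Hent_pair_le hY hE).trans (by simpa using Hent_le_log_card (ν := ν) hE)
  -- a correct guess pins `X` down to `g Y`; a wrong one leaves at most `card S` candidates
  have hfiber : ∀ v : T × Bool, log #{x | f x = v} ≤ if v.2 then 0 else log (Fintype.card S) := by
    rintro ⟨t, _ | _⟩
    · refine Real.log_natCast_le_log_natCast (card_le_card_of_injOn Prod.fst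
        (fun _ _ => mem_univ _) fun x hx y hy hxy => Prod.ext hxy ?_)
      simp only [coe_filter, mem_univ, true_and, Set.mem_ofPred_eq, f, Prod.ext_iff] at hx hy
      rw [hx.1, hy.1]
    · refine Real.log_nonpos (Nat.cast_nonneg _) (Nat.cast_le_one.mpr
        (card_le_one.mpr fun x hx y hy => ?_))
      simp only [mem_filter, mem_univ, true_and, f, Prod.ext_iff, decide_eq_true_eq] at hx hy
      obtain ⟨hx2, hx1⟩ := hx
      obtain ⟨hy2, hy1⟩ := hy
      subst hx2
      exact Prod.ext (hx1.symm.trans (hy2 ▸ hy1)) hy2.symm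
  have herr : {ω | g (Y ω) ≠ X ω} = E ⁻¹' {false} := by
    ext ω
    simp [E]
  have hgroup : Hent ν (fun ω => (X ω, Y ω)) ≤ Hent ν (fun ω => (Y ω, E ω)) +
      ∑ v, ν.real ((fun ω => (Y ω, E ω)) ⁻¹' {v}) * log #{x | f x = v} :=
    Hent_le_Hent_comp_add f (hX.prodMk hY)
  have hsum : ∑ v, ν.real ((fun ω => (Y ω, E ω)) ⁻¹' {v}) * log #{x | f x = v} ≤
      ν.real {ω | g (Y ω) ≠ X ω} * log (Fintype.card S) := by
    calc _ ≤ ∑ v : T × Bool, ν.real ((fun ω => (Y ω, E ω)) ⁻¹' {v}) *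
          (if v.2 then 0 else log (Fintype.card S)) :=
        sum_le_sum fun v _ => mul_le_mul_of_nonneg_left (hfiber v) measureReal_nonneg
      _ = _ := by
        rw [Fintype.sum_prod_type_right, Fintype.sum_bool]
        simp only [if_true, Bool.false_eq_true, if_false, mul_zero, sum_const_zero, zero_add,
          ← sum_mul, sum_measureReal_pair_preimage_left hY, herr]
  linarith

lemma Hent_triple_le_fano {U : Type*} [Fintype U] [MeasurableSpace U]
    [MeasurableSingletonClass U] {Z : Ω → U} {X : Ω → S} {Y : Ω → T} (hZ : Measurable Z)
    (hX : Measurable X) (hY : Measurable Y) (g : T → S) :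
    Hent ν (fun ω => (Z ω, (X ω, Y ω))) ≤ Hent ν Z + log (Fintype.card T) + log 2 +
      ν.real {ω | g (Y ω) ≠ X ω} * log (Fintype.card S) := by
  linarith [Hent_pair_le (ν := ν) hZ (hX.prodMk hY), Hent_pair_le_fano (ν := ν) hX hY g,
    Hent_le_log_card (ν := ν) hY]

end Entropy

section Product

variable {Ω₁ Ω₂ S : Type*} [MeasurableSpace Ω₁] [MeasurableSpace Ω₂] [Fintype S]
  (μ₁ : Measure Ω₁) (μ₂ : Measure Ω₂)

lemma Hent_prod_fst [IsProbabilityMeasure μ₂] (X : Ω₁ → S) :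
    Hent (μ₁.prod μ₂) (fun p => X p.1) = Hent μ₁ X := by
  simp only [Hent_eq_sum_measureReal]
  congr! 2 with s
  rw [show (fun p : Ω₁ × Ω₂ => X p.1) ⁻¹' {s} = (X ⁻¹' {s}) ×ˢ Set.univ by ext; simp,
    measureReal_prod_prod, probReal_univ, mul_one]

lemma Hent_prod_snd [IsProbabilityMeasure μ₁] [SFinite μ₂] (X : Ω₂ → S) :
    Hent (μ₁.prod μ₂) (fun p => X p.2) = Hent μ₂ X := by
  simp only [Hent_eq_sum_measureReal]
  congr! 2 with s
  rw [show (fun p : Ω₁ × Ω₂ => X p.2) ⁻¹' {s} = Set.univ ×ˢ (X ⁻¹' {s}) by ext; simp,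
    measureReal_prod_prod, probReal_univ, one_mul]

end Product

section Uniform

variable {α β : Type*} [Fintype α] [MeasurableSpace α] [Fintype β] [MeasurableSpace β]

lemma unif_singleton [MeasurableSingletonClass α] (a : α) :
    unif α {a} = (Fintype.card α : ℝ≥0∞)⁻¹ := by
  simp [unif]

instance isProbabilityMeasure_unif [Nonempty α] : IsProbabilityMeasure (unif α) :=
  ⟨by simp [unif, ENNReal.inv_mul_cancel]⟩

lemma Hent_unif [MeasurableSingletonClass α] [Nonempty α] :
    Hent (unif α) id = log (Fintype.card α) := by
  have hN : (Fintype.card α : ℝ) ≠ 0 := Nat.cast_ne_zero.mpr Fintype.card_ne_zero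
  simp only [Hent_eq_sum_measureReal, Set.preimage_id, Measure.real, unif_singleton,
    ENNReal.toReal_inv, ENNReal.toReal_natCast, sum_const, card_univ,
    nsmul_eq_mul, negMulLog, log_inv]
  field_simp

lemma unif_map_swap : (unif (α × β)).map Prod.swap = unif (β × α) := by
  ext s hs
  rw [Measure.map_apply measurable_swap hs, unif, unif, Measure.smul_apply, Measure.smul_apply,
    Measure.count_apply (hs.preimage measurable_swap), Measure.count_apply hs,
    Set.encard_preimage_of_bijective Prod.swap_bijective, Fintype.card_prod, Fintype.card_prod,
    mul_comm]

lemma Hent_unif_prod_pair {Ω S T : Type*} [MeasurableSpace Ω] {μ : Measure Ω}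
    [IsProbabilityMeasure μ] [MeasurableSingletonClass α] [Nonempty α]
    [Fintype S] [MeasurableSpace S] [MeasurableSingletonClass S]
    [Fintype T] [MeasurableSpace T] [MeasurableSingletonClass T] {X : Ω → S} {Y : Ω → T}
    (hX : Measurable X) (hY : Measurable Y) (hXY : IndepFun X Y μ) :
    Hent ((unif α).prod μ) (fun p => (p.1, (X p.2, Y p.2))) =
      log (Fintype.card α) + Hent μ X + Hent μ Y := by
  have hW : IndepFun (fun p : α × Ω => p.1) (fun p => (X p.2, Y p.2)) ((unif α).prod μ) :=
    indepFun_prod (X := id) measurable_id (hX.prodMk hY)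
  rw [hW.Hent_pair measurable_fst ((hX.prodMk hY).comp measurable_snd),
    show Hent ((unif α).prod μ) (fun p => p.1) = _ from (Hent_prod_fst _ _ id).trans Hent_unif,
    Hent_prod_snd _ _ fun ω => (X ω, Y ω), hXY.Hent_pair hX hY, add_assoc]

end Uniform

namespace TWCode

variable {q n M1 M2 : ℕ}

def swap (C : TWCode q n M1 M2) : TWCode q n M2 M1 := ⟨C.f2, C.f1, C.g2, C.g1⟩

variable (C : TWCode q n M1 M2) (w1 : Fin M1) (w2 : Fin M2)

lemma TWX_eq (z1 z2 : Fin n → ZMod q) (i : Fin n) :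
    TWX C w1 w2 z1 z2 i = (C.f1 w1 i fun j => TWY1 C w1 w2 z1 z2 (Fin.castLE i.2.le j),
      C.f2 w2 i fun j => TWY2 C w1 w2 z1 z2 (Fin.castLE i.2.le j)) := by
  rw [TWX]
  rfl

lemma TWX_congr {z1 z2 z1' z2' : Fin n → ZMod q} (i : Fin n)
    (h : ∀ j < i, z1 j = z1' j ∧ z2 j = z2' j) :
    TWX C w1 w2 z1 z2 i = TWX C w1 w2 z1' z2' i := by
  induction i using WellFoundedLT.induction with
  | ind i ih =>
    have hlt : ∀ j : Fin i.1, Fin.castLE i.2.le j < i := fun j => j.2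
    have hpast : ∀ j : Fin i.1, TWX C w1 w2 z1 z2 (Fin.castLE i.2.le j) =
        TWX C w1 w2 z1' z2' (Fin.castLE i.2.le j) := fun j =>
      ih _ (hlt j) fun k hk => h k (hk.trans (hlt j))
    rw [TWX_eq, TWX_eq]
    simp only [TWY1, TWY2, hpast, fun j => (h _ (hlt j)).1, fun j => (h _ (hlt j)).2]

lemma TWY2_injective (z1 : Fin n → ZMod q) : Function.Injective (TWY2 C w1 w2 z1) := by
  intro z2 z2' hY
  funext i
  induction i using WellFoundedLT.induction with
  | ind i ih =>
    have hX : TWX C w1 w2 z1 z2 i = TWX C w1 w2 z1 z2' i :=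
      TWX_congr C w1 w2 i fun j hj => ⟨rfl, ih j hj⟩
    have hYi := congrFun hY i
    rw [TWY2, TWY2, hX] at hYi
    exact add_left_cancel hYi

lemma injective_messages_noise_output :
    Function.Injective fun x : (Fin M1 × Fin M2) × (Fin n → ZMod q) × (Fin n → ZMod q) =>
      (x.2.1, x.1.1, x.1.2, TWY2 C x.1.1 x.1.2 x.2.1 x.2.2) := by
  rintro ⟨⟨w1, w2⟩, z1, z2⟩ ⟨⟨w1', w2'⟩, z1', z2'⟩ h
  simp only [Prod.mk.injEq] at h
  obtain ⟨rfl, rfl, rfl, h⟩ := h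
  rw [TWY2_injective C w1 w2 z1 h]

lemma TWX_swap (z1 z2 : Fin n → ZMod q) (i : Fin n) :
    TWX C.swap w2 w1 z2 z1 i = (TWX C w1 w2 z1 z2 i).swap := by
  induction i using WellFoundedLT.induction with
  | ind i ih =>
    have hpast : ∀ j : Fin i.1, TWY1 C.swap w2 w1 z2 z1 (Fin.castLE i.2.le j) =
        TWY2 C w1 w2 z1 z2 (Fin.castLE i.2.le j) := fun j => by
      rw [TWY1, TWY2, ih _ j.2, Prod.fst_swap, Prod.snd_swap, add_comm (TWX C w1 w2 z1 z2 _).2]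
    have hpast' : ∀ j : Fin i.1, TWY2 C.swap w2 w1 z2 z1 (Fin.castLE i.2.le j) =
        TWY1 C w1 w2 z1 z2 (Fin.castLE i.2.le j) := fun j => by
      rw [TWY1, TWY2, ih _ j.2, Prod.fst_swap, Prod.snd_swap, add_comm (TWX C w1 w2 z1 z2 _).2]
    rw [TWX_eq, TWX_eq]
    simp only [hpast, hpast', Prod.swap_prod_mk]
    rfl

lemma TWY2_swap (z1 z2 : Fin n → ZMod q) :
    TWY2 C.swap w2 w1 z2 z1 = TWY1 C w1 w2 z1 z2 := by
  funext i
  rw [TWY2, TWY1, TWX_swap, Prod.fst_swap, Prod.snd_swap, add_comm (TWX C w1 w2 z1 z2 i).2]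

end TWCode

section Converse

variable {Ω : Type*} [MeasurableSpace Ω] (μ : Measure Ω) [IsProbabilityMeasure μ]
  {q n M1 M2 : ℕ}

lemma log_add_Hent_le_twPe2 [NeZero q] {Z1 Z2 : Ω → ℕ → ZMod q} (hZ1 : Measurable Z1)
    (hZ2 : Measurable Z2) (hIndep : IndepFun Z1 Z2 μ) (hM1 : 0 < M1) (hM2 : 0 < M2)
    (C : TWCode q n M1 M2) :
    log M1 + Hent μ (fun ω => (fun i : Fin n => Z2 ω i)) ≤
      n * log q + log 2 + (twPe2 μ Z1 Z2 C).toReal * log M1 := by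
  have : Nonempty (Fin M1) := ⟨⟨0, hM1⟩⟩
  have : Nonempty (Fin M2) := ⟨⟨0, hM2⟩⟩
  set ν := (unif (Fin M1 × Fin M2)).prod μ
  have hblock : Measurable fun (z : ℕ → ZMod q) (i : Fin n) => z i := by fun_prop
  set N1 : Ω → (Fin n → ZMod q) := fun ω i => Z1 ω i
  set N2 : Ω → (Fin n → ZMod q) := fun ω i => Z2 ω i
  have hN1 : Measurable N1 := hblock.comp hZ1
  have hN2 : Measurable N2 := hblock.comp hZ2
  have hN1' : Measurable fun p : (Fin M1 × Fin M2) × Ω => N1 p.2 := hN1.comp measurable_snd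
  set T : (Fin M1 × Fin M2) × Ω → Fin M2 × (Fin n → ZMod q) :=
    fun p => (p.1.2, TWY2 C p.1.1 p.1.2 (N1 p.2) (N2 p.2))
  have hT : Measurable T := (measurable_of_countable fun x : (Fin M1 × Fin M2) ×
      (Fin n → ZMod q) × (Fin n → ZMod q) => (x.1.2, TWY2 C x.1.1 x.1.2 x.2.1 x.2.2)).comp
    (measurable_fst.prodMk (hN1'.prodMk (hN2.comp measurable_snd)))
  have hjoint : Hent ν (fun p => (p.1, (N1 p.2, N2 p.2))) =
      log (Fintype.card (Fin M1 × Fin M2)) + Hent μ N1 + Hent μ N2 :=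
    Hent_unif_prod_pair hN1 hN2 (hIndep.comp hblock hblock)
  have hrearrange : Hent ν (fun p => (N1 p.2, (p.1.1, T p))) =
      Hent ν (fun p => (p.1, (N1 p.2, N2 p.2))) :=
    (Hent_comp_of_injective (ν := ν) (TWCode.injective_messages_noise_output C)
      fun p => (p.1, (N1 p.2, N2 p.2)) :)
  have hfano : Hent ν (fun p => (N1 p.2, (p.1.1, T p))) ≤ Hent ν (fun p => N1 p.2) +
      log (Fintype.card (Fin M2 × (Fin n → ZMod q))) + log 2 +
        (twPe2 μ Z1 Z2 C).toReal * log (Fintype.card (Fin M1)) :=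
    Hent_triple_le_fano hN1' (measurable_fst.comp measurable_fst) hT
      fun t : Fin M2 × (Fin n → ZMod q) => C.g2 t.1 t.2
  have hq : (q : ℝ) ^ n ≠ 0 := pow_ne_zero _ (Nat.cast_ne_zero.mpr (NeZero.ne q))
  simp only [Fintype.card_prod, Fintype.card_fin, Fintype.card_fun, ZMod.card, Nat.cast_mul,
    Nat.cast_pow, log_mul (Nat.cast_ne_zero.mpr hM1.ne') (Nat.cast_ne_zero.mpr hM2.ne'),
    log_mul (Nat.cast_ne_zero.mpr hM2.ne') hq, log_pow] at hjoint hfano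
  rw [hrearrange, hjoint, Hent_prod_snd] at hfano
  linarith

lemma twPe2_swap (Z1 Z2 : Ω → ℕ → ZMod q) (hM1 : 0 < M1) (hM2 : 0 < M2)
    (C : TWCode q n M1 M2) : twPe2 μ Z2 Z1 C.swap = twPe1 μ Z1 Z2 C := by
  have : Nonempty (Fin M1) := ⟨⟨0, hM1⟩⟩
  have : Nonempty (Fin M2) := ⟨⟨0, hM2⟩⟩
  let e : (Fin M2 × Fin M1) × Ω ≃ᵐ (Fin M1 × Fin M2) × Ω :=
    MeasurableEquiv.prodCongr MeasurableEquiv.prodComm (MeasurableEquiv.refl Ω)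
  have hmap : ((unif (Fin M2 × Fin M1)).prod μ).map e = (unif (Fin M1 × Fin M2)).prod μ := by
    rw [show ⇑e = Prod.map Prod.swap id from rfl,
      ← Measure.map_prod_map _ _ measurable_swap measurable_id, unif_map_swap, Measure.map_id]
  rw [twPe1, ← hmap, e.map_apply, twPe2]
  congr 1
  ext p
  simp only [Set.mem_ofPred_eq, Set.mem_preimage, TWCode.TWY2_swap]
  rfl

end Converse

lemma le_sub_of_fano_bound {R L h : ℝ} {M : ℕ → ℕ} {P H : ℕ → ℝ}
    (hR : ∀ n ≥ 1, R ≤ log (M n) / n)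
    (hfano : ∀ n ≥ 1, log (M n) + H n ≤ n * L + log 2 + P n * log (M n))
    (hP : Tendsto P atTop (𝓝 0)) (hH : Tendsto (fun n => H n / n) atTop (𝓝 h)) :
    R ≤ L - h := by
  have hlhs : Tendsto (fun n => R * (1 - P n)) atTop (𝓝 R) := by
    simpa using (tendsto_const_nhds (x := R)).mul ((tendsto_const_nhds (x := (1 : ℝ))).sub hP)
  have hrhs : Tendsto (fun n : ℕ => L + log 2 / n - H n / n) atTop (𝓝 (L - h)) := by
    simpa using (tendsto_const_nhds.add (tendsto_const_div_atTop_nhds_zero_nat _)).sub hH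
  refine le_of_tendsto_of_tendsto hlhs hrhs ?_
  filter_upwards [eventually_ge_atTop 1, hP.eventually_le_const zero_lt_one] with n hn hPn
  have hn' : (0 : ℝ) < n := by exact_mod_cast hn
  have hRn : R * n ≤ log (M n) := (le_div_iff₀ hn').mp (hR n hn)
  rw [show L + log 2 / n - H n / n = (n * L + log 2 - H n) / n by field_simp, le_div_iff₀ hn']
  nlinarith [mul_le_mul_of_nonneg_right hRn (sub_nonneg.mpr hPn), hfano n hn]

theorem twc_converse_general {Ω : Type*} [MeasurableSpace Ω] (μ : Measure Ω)
    [IsProbabilityMeasure μ] (q : ℕ) [NeZero q]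
    (Z1 Z2 : Ω → ℕ → ZMod q) (hZ1 : Measurable Z1) (hZ2 : Measurable Z2)
    (hIndep : IndepFun Z1 Z2 μ)
    (hbar1 hbar2 : ℝ)
    (hrate1 : Tendsto (fun n : ℕ =>
      Hent μ (fun ω => (fun i : Fin n => Z1 ω i)) / n) atTop (𝓝 hbar1))
    (hrate2 : Tendsto (fun n : ℕ =>
      Hent μ (fun ω => (fun i : Fin n => Z2 ω i)) / n) atTop (𝓝 hbar2))
    (R1 R2 : ℝ) (hach : twAchievable μ q Z1 Z2 R1 R2) :
    R1 ≤ Real.log q - hbar2 ∧ R2 ≤ Real.log q - hbar1 := by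
  obtain ⟨M1, M2, C, hM, hPe1, hPe2⟩ := hach
  have toReal_tendsto {u : ℕ → ℝ≥0∞} (hu : Tendsto u atTop (𝓝 0)) :
      Tendsto (fun n => (u n).toReal) atTop (𝓝 0) := by
    have := (ENNReal.tendsto_toReal ENNReal.zero_ne_top).comp hu
    rwa [ENNReal.toReal_zero] at this
  constructor
  · refine le_sub_of_fano_bound (fun n hn => (hM n hn).2.2.1) (fun n hn => ?_)
      (toReal_tendsto hPe2) hrate2
    exact log_add_Hent_le_twPe2 μ hZ1 hZ2 hIndep (hM n hn).1 (hM n hn).2.1 (C n)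
  · refine le_sub_of_fano_bound (fun n hn => (hM n hn).2.2.2) (fun n hn => ?_)
      (toReal_tendsto hPe1) hrate1
    rw [← twPe2_swap μ Z1 Z2 (hM n hn).1 (hM n hn).2.1]
    exact log_add_Hent_le_twPe2 μ hZ2 hZ1 hIndep.symm (hM n hn).2.1 (hM n hn).1 (C n).swap

/-- **Converse part of Theorem 1**: for the additive-noise two-way channel with stationary
ergodic noise processes Z1 and Z2 that are independent of each other (and, by construction,
of the uniform independent messages), every achievable rate pair (R1, R2) satisfies
R1 ≤ log q − H̄(Z2) and R2 ≤ log q − H̄(Z1), where H̄(Zj) = lim_n H(Z_j^n)/n. -/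
theorem twc_converse {Ω : Type*} [MeasurableSpace Ω] (μ : Measure Ω)
    [IsProbabilityMeasure μ] (q : ℕ) [NeZero q] (hq : 2 ≤ q)
    (Z1 Z2 : Ω → ℕ → ZMod q) (hZ1 : Measurable Z1) (hZ2 : Measurable Z2)
    (hStatErg1 : Ergodic shift (μ.map Z1))
    (hStatErg2 : Ergodic shift (μ.map Z2))
    (hIndep : IndepFun Z1 Z2 μ)
    (hbar1 hbar2 : ℝ)
    (hrate1 : Tendsto (fun n : ℕ =>
      Hent μ (fun ω => (fun i : Fin n => Z1 ω i)) / n) atTop (𝓝 hbar1))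
    (hrate2 : Tendsto (fun n : ℕ =>
      Hent μ (fun ω => (fun i : Fin n => Z2 ω i)) / n) atTop (𝓝 hbar2))
    (R1 R2 : ℝ) (hach : twAchievable μ q Z1 Z2 R1 R2) :
    R1 ≤ Real.log q - hbar2 ∧ R2 ≤ Real.log q - hbar1 :=
  twc_converse_general μ q Z1 Z2 hZ1 hZ2 hIndep hbar1 hbar2 hrate1 hrate2 R1 R2 hach

end
end

section
/- Markov chain lemma for the two-way channel converse: for any (n, M1, M2) code for the additive-noise two-way channel in which the noise vector Z2^n is independent of (W1, W2, Z1^n), for every 1 ≤ i ≤ n the random variable Z_{2,i} is conditionally independent of (W1, W2, X1^i, X2^i) given Z2^{i−1}; consequently H(Z_{2,i} | Z2^{i−1}, W1, W2, X1^i, X2^i) = H(Z_{2,i} | Z2^{i−1}). -/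
/-!
The encoders are causal, so the inputs up to time `i` are determined by `(W1, W2, Z1^n)`
together with the past noise `Z2^{i-1}`. Hence on each event `{Z2^{i-1} = c}` the tuple
`(W1, W2, X1^i, X2^i)` is a function of `(W1, W2, Z1^n)`, which is independent of `Z2^n`,
while `Z_{2,i}` and `Z2^{i-1}` are functions of `Z2^n`; this is the conditional independence.
The entropy identity then holds fibre by fibre over `c`: when `P(x, y, c) P(c) = P(x, c) P(y, c)`,
the joint entropy on the fibre splits as the sum of the marginal ones.
-/

open MeasureTheory ProbabilityTheory Real Filter Topology
open scoped ENNReal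

noncomputable section

/-- Conditional Shannon entropy H(X | Y) = H(X, Y) − H(Y). -/
def Hcond {Ω S T : Type*} [MeasurableSpace Ω] [Fintype S] [Fintype T]
    (μ : Measure Ω) (X : Ω → S) (Y : Ω → T) : ℝ :=
  Hent μ (fun ω => (X ω, Y ω)) - Hent μ Y

/-- Elementary conditional independence of finitely-valued random variables X and Y given Z:
for all values a, b, c,  P(X=a, Y=b, Z=c) · P(Z=c) = P(X=a, Z=c) · P(Y=b, Z=c). -/
def CondIndepElem {Ω S T U : Type*} [MeasurableSpace Ω] (μ : Measure Ω)
    (X : Ω → S) (Y : Ω → T) (Z : Ω → U) : Prop :=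
  ∀ (a : S) (b : T) (c : U),
    μ (X ⁻¹' {a} ∩ Y ⁻¹' {b} ∩ Z ⁻¹' {c}) * μ (Z ⁻¹' {c}) =
      μ (X ⁻¹' {a} ∩ Z ⁻¹' {c}) * μ (Y ⁻¹' {b} ∩ Z ⁻¹' {c})

lemma sum_negMulLog_of_mul_eq_mul {S T : Type*} [Fintype S] [Fintype T]
    {u : S → ℝ} {v : T → ℝ} {f : S → T → ℝ} {p : ℝ} (hp : p ≠ 0)
    (hu : ∑ a, u a = p) (hv : ∑ b, v b = p) (hf : ∀ a b, f a b * p = u a * v b) :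
    ∑ a, ∑ b, negMulLog (f a b) =
      ∑ a, negMulLog (u a) + ∑ b, negMulLog (v b) - negMulLog p := by
  have hf' : ∀ a b, f a b = u a * (v b * p⁻¹) := fun a b => by
    rw [← mul_assoc, ← hf, mul_inv_cancel_right₀ hp]
  have hinv : negMulLog p⁻¹ = p⁻¹ * Real.log p := by simp [negMulLog, Real.log_inv]
  simp only [hf', negMulLog_mul, hinv, Finset.sum_add_distrib, ← Finset.mul_sum,
    ← Finset.sum_mul, hu, hv]
  rw [negMulLog]
  field_simp
  ring

lemma sum_toReal_measure_preimage_singleton_inter {Ω S : Type*} [MeasurableSpace Ω] [Fintype S]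
    [MeasurableSpace S] [MeasurableSingletonClass S] (μ : Measure Ω) [IsFiniteMeasure μ]
    {X : Ω → S} (hX : Measurable X) (s : Set Ω) :
    ∑ a, (μ (X ⁻¹' {a} ∩ s)).toReal = (μ s).toReal := by
  rw [← ENNReal.toReal_sum fun a _ => measure_ne_top μ _]
  have := sum_measure_preimage_singleton (μ := μ.restrict s) Finset.univ
    fun a _ => hX (measurableSet_singleton a)
  simp_rw [Measure.restrict_apply (hX (measurableSet_singleton _))] at this
  simp [this]

lemma preimage_pair_singleton {Ω S T : Type*} (X : Ω → S) (Y : Ω → T) (a : S) (b : T) :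
    (fun ω => (X ω, Y ω)) ⁻¹' {(a, b)} = X ⁻¹' {a} ∩ Y ⁻¹' {b} := by
  rw [← Set.singleton_prod_singleton, Set.mk_preimage_prod]

lemma Hcond_pair_eq_of_condIndepElem {Ω S T U : Type*} [MeasurableSpace Ω]
    [Fintype S] [Fintype T] [Fintype U] [MeasurableSpace S] [MeasurableSpace T]
    [MeasurableSingletonClass S] [MeasurableSingletonClass T]
    (μ : Measure Ω) [IsProbabilityMeasure μ] {X : Ω → S} {B : Ω → T} {Z : Ω → U}
    (hX : Measurable X) (hB : Measurable B) (h : CondIndepElem μ X B Z) :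
    Hcond μ X (fun ω => (Z ω, B ω)) = Hcond μ X Z := by
  have hXZB : Hent μ (fun ω => (X ω, Z ω, B ω)) =
      ∑ c, ∑ a, ∑ b, negMulLog (μ (X ⁻¹' {a} ∩ B ⁻¹' {b} ∩ Z ⁻¹' {c})).toReal := by
    simp only [Hent, Fintype.sum_prod_type]
    rw [Finset.sum_comm]
    simp only [preimage_pair_singleton, Set.inter_assoc, Set.inter_comm (Z ⁻¹' _)]
  have hZB : Hent μ (fun ω => (Z ω, B ω)) =
      ∑ c, ∑ b, negMulLog (μ (B ⁻¹' {b} ∩ Z ⁻¹' {c})).toReal := by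
    simp only [Hent, Fintype.sum_prod_type, preimage_pair_singleton, Set.inter_comm (Z ⁻¹' _)]
  have hXZ : Hent μ (fun ω => (X ω, Z ω)) =
      ∑ c, ∑ a, negMulLog (μ (X ⁻¹' {a} ∩ Z ⁻¹' {c})).toReal := by
    rw [Hent, Fintype.sum_prod_type, Finset.sum_comm]
    simp only [preimage_pair_singleton]
  have fiber : ∀ c, ∑ a, ∑ b, negMulLog (μ (X ⁻¹' {a} ∩ B ⁻¹' {b} ∩ Z ⁻¹' {c})).toReal =
      ∑ a, negMulLog (μ (X ⁻¹' {a} ∩ Z ⁻¹' {c})).toReal +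
        ∑ b, negMulLog (μ (B ⁻¹' {b} ∩ Z ⁻¹' {c})).toReal - negMulLog (μ (Z ⁻¹' {c})).toReal := by
    intro c
    by_cases hc : μ (Z ⁻¹' {c}) = 0
    · have null : ∀ s, μ (s ∩ Z ⁻¹' {c}) = 0 := fun s => measure_inter_null_of_null_right s hc
      simp only [null, hc, ENNReal.toReal_zero, negMulLog_zero, Finset.sum_const_zero, sub_zero,
        add_zero]
    refine sum_negMulLog_of_mul_eq_mul (ENNReal.toReal_ne_zero.2 ⟨hc, measure_ne_top μ _⟩)
      (sum_toReal_measure_preimage_singleton_inter μ hX _)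
      (sum_toReal_measure_preimage_singleton_inter μ hB _) fun a b => ?_
    rw [← ENNReal.toReal_mul, ← ENNReal.toReal_mul, h a b c]
  rw [Hcond, Hcond, hXZB, hZB, hXZ, Hent]
  simp only [fiber, Finset.sum_sub_distrib, Finset.sum_add_distrib]
  ring

lemma condIndepElem_of_indepFun {Ω α β S T U : Type*} [MeasurableSpace Ω]
    [MeasurableSpace α] [DiscreteMeasurableSpace α] [MeasurableSpace β] [DiscreteMeasurableSpace β]
    {μ : Measure Ω} {V : Ω → α} {N : Ω → β} (hVN : IndepFun V N μ) (f : β → S) (g : β → U)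
    {B : Ω → T} (hB : ∀ ω ω', V ω = V ω' → g (N ω) = g (N ω') → B ω = B ω') :
    CondIndepElem μ (fun ω => f (N ω)) B (fun ω => g (N ω)) := by
  intro a b c
  -- On the fibre `{g ∘ N = c}`, `B` is a function of `V`, so `{B = b}` is a `V`-event there.
  set A := V '' (B ⁻¹' {b} ∩ (fun ω => g (N ω)) ⁻¹' {c})
  have hBA : ∀ ω, g (N ω) = c → (B ω = b ↔ V ω ∈ A) := by
    refine fun ω hω => ⟨fun hb => ⟨ω, ⟨hb, hω⟩, rfl⟩, ?_⟩
    rintro ⟨ω', ⟨hb, hω'⟩, hV⟩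
    exact hB ω ω' hV.symm (hω.trans hω'.symm) ▸ hb
  have h2 : B ⁻¹' {b} ∩ (fun ω => g (N ω)) ⁻¹' {c} = V ⁻¹' A ∩ N ⁻¹' (g ⁻¹' {c}) := by
    ext ω
    simp only [Set.mem_inter_iff, Set.mem_preimage, Set.mem_singleton_iff]
    exact ⟨fun ⟨hb, hc⟩ => ⟨(hBA ω hc).1 hb, hc⟩, fun ⟨hA, hc⟩ => ⟨(hBA ω hc).2 hA, hc⟩⟩
  have h3 : (fun ω => f (N ω)) ⁻¹' {a} ∩ B ⁻¹' {b} ∩ (fun ω => g (N ω)) ⁻¹' {c} =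
      V ⁻¹' A ∩ N ⁻¹' (f ⁻¹' {a} ∩ g ⁻¹' {c}) := by
    rw [Set.inter_assoc, h2, Set.inter_left_comm]
    rfl
  rw [h3, h2, hVN.measure_inter_preimage_eq_mul _ _ .of_discrete .of_discrete,
    hVN.measure_inter_preimage_eq_mul _ _ .of_discrete .of_discrete]
  change _ * μ (N ⁻¹' (g ⁻¹' {c})) = μ (N ⁻¹' (f ⁻¹' {a} ∩ g ⁻¹' {c})) * _
  ring

lemma TWX_eq_of_forall_lt_eq {q n M1 M2 : ℕ} (C : TWCode q n M1 M2) (w1 : Fin M1) (w2 : Fin M2)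
    (z1 : Fin n → ZMod q) {z2 z2' : Fin n → ZMod q} (i : Fin n)
    (h : ∀ j < i, z2 j = z2' j) : TWX C w1 w2 z1 z2 i = TWX C w1 w2 z1 z2' i := by
  induction i using WellFoundedLT.induction with
  | _ i ih =>
    have hpast : ∀ j : Fin i.1, TWX C w1 w2 z1 z2 ⟨j, j.2.trans i.2⟩ =
        TWX C w1 w2 z1 z2' ⟨j, j.2.trans i.2⟩ :=
      fun j => ih _ j.2 fun k hk => h k (hk.trans j.2)
    rw [TWX, TWX]
    simp only [hpast, fun j : Fin i.1 => h ⟨j, j.2.trans i.2⟩ j.2]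

lemma measurable_TWX {Ω : Type*} [MeasurableSpace Ω] {q n M1 M2 : ℕ} [NeZero q]
    (C : TWCode q n M1 M2)
    {W1 : Ω → Fin M1} {W2 : Ω → Fin M2} {Z1 Z2 : Ω → Fin n → ZMod q}
    (hW1 : Measurable W1) (hW2 : Measurable W2) (hZ1 : Measurable Z1) (hZ2 : Measurable Z2)
    (i : Fin n) : Measurable fun ω => TWX C (W1 ω) (W2 ω) (Z1 ω) (Z2 ω) i :=
  (Measurable.of_discrete (f := fun v : Fin M1 × Fin M2 × (Fin n → ZMod q) × (Fin n → ZMod q) =>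
    TWX C v.1 v.2.1 v.2.2.1 v.2.2.2 i)).comp (hW1.prodMk (hW2.prodMk (hZ1.prodMk hZ2)))

theorem twc_markov_chain_lemma_general {Ω : Type*} [MeasurableSpace Ω] (μ : Measure Ω)
    [IsProbabilityMeasure μ] (q : ℕ) [NeZero q]
    (n M1 M2 : ℕ) (C : TWCode q n M1 M2)
    (W1 : Ω → Fin M1) (W2 : Ω → Fin M2) (Z1 Z2 : Ω → Fin n → ZMod q)
    (hW1 : Measurable W1) (hW2 : Measurable W2)
    (hZ1 : Measurable Z1) (hZ2 : Measurable Z2)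
    (hindep : IndepFun (fun ω => (W1 ω, W2 ω, Z1 ω)) Z2 μ) :
    ∀ i : Fin n,
      CondIndepElem μ
        -- X = Z_{2,i}
        (fun ω => Z2 ω i)
        -- Y = (W1, W2, X1^i, X2^i)
        (fun ω => (W1 ω, W2 ω,
          (fun j : Fin (i.1 + 1) =>
            (TWX C (W1 ω) (W2 ω) (Z1 ω) (Z2 ω)
              ⟨j.1, Nat.lt_of_le_of_lt (Nat.lt_succ_iff.mp j.2) i.2⟩).1),
          (fun j : Fin (i.1 + 1) =>
            (TWX C (W1 ω) (W2 ω) (Z1 ω) (Z2 ω)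
              ⟨j.1, Nat.lt_of_le_of_lt (Nat.lt_succ_iff.mp j.2) i.2⟩).2)))
        -- Z = Z2^{i-1}
        (fun ω => (fun j : Fin i.1 => Z2 ω ⟨j.1, j.2.trans i.2⟩)) ∧
      Hcond μ (fun ω => Z2 ω i)
        (fun ω => ((fun j : Fin i.1 => Z2 ω ⟨j.1, j.2.trans i.2⟩), W1 ω, W2 ω,
          (fun j : Fin (i.1 + 1) =>
            (TWX C (W1 ω) (W2 ω) (Z1 ω) (Z2 ω)
              ⟨j.1, Nat.lt_of_le_of_lt (Nat.lt_succ_iff.mp j.2) i.2⟩).1),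
          (fun j : Fin (i.1 + 1) =>
            (TWX C (W1 ω) (W2 ω) (Z1 ω) (Z2 ω)
              ⟨j.1, Nat.lt_of_le_of_lt (Nat.lt_succ_iff.mp j.2) i.2⟩).2))) =
      Hcond μ (fun ω => Z2 ω i)
        (fun ω => (fun j : Fin i.1 => Z2 ω ⟨j.1, j.2.trans i.2⟩)) := by
  intro i
  refine (fun hCI => ⟨hCI, Hcond_pair_eq_of_condIndepElem μ ?_ ?_ hCI⟩)
    (condIndepElem_of_indepFun hindep (fun z => z i)
      (fun z (j : Fin i.1) => z ⟨j, j.2.trans i.2⟩) ?_)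
  · intro ω ω' hV hpast
    obtain ⟨h1, h2, h3⟩ : W1 ω = W1 ω' ∧ W2 ω = W2 ω' ∧ Z1 ω = Z1 ω' := by simpa using hV
    have hcausal : ∀ j ≤ i, TWX C (W1 ω) (W2 ω) (Z1 ω) (Z2 ω) j =
        TWX C (W1 ω') (W2 ω') (Z1 ω') (Z2 ω') j := fun j hj => by
      rw [h1, h2, h3]
      exact TWX_eq_of_forall_lt_eq C _ _ _ j fun k hk => congrFun hpast ⟨k, hk.trans_le hj⟩
    simp only [Prod.mk.injEq]
    refine ⟨h1, h2, ?_, ?_⟩ <;> funext j <;> rw [hcausal _ (Nat.lt_succ_iff.mp j.2)]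
  · exact (measurable_pi_apply i).comp hZ2
  · have := measurable_TWX C hW1 hW2 hZ1 hZ2
    fun_prop

/-- **Markov chain lemma for the two-way channel converse**: for any (n, M1, M2) code for
the additive-noise two-way channel in which the noise vector Z2^n is independent of
(W1, W2, Z1^n), for every time i (1-based time i+1, so 1 ≤ i+1 ≤ n) the noise letter
Z_{2,i} is conditionally independent of (W1, W2, X1^i, X2^i) given the past noise Z2^{i−1};
consequently H(Z_{2,i} | Z2^{i−1}, W1, W2, X1^i, X2^i) = H(Z_{2,i} | Z2^{i−1}). -/
theorem twc_markov_chain_lemma {Ω : Type*} [MeasurableSpace Ω] (μ : Measure Ω)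
    [IsProbabilityMeasure μ] (q : ℕ) [NeZero q] (hq : 2 ≤ q)
    (n M1 M2 : ℕ) (C : TWCode q n M1 M2)
    (W1 : Ω → Fin M1) (W2 : Ω → Fin M2) (Z1 Z2 : Ω → Fin n → ZMod q)
    (hW1 : Measurable W1) (hW2 : Measurable W2)
    (hZ1 : Measurable Z1) (hZ2 : Measurable Z2)
    (hindep : IndepFun (fun ω => (W1 ω, W2 ω, Z1 ω)) Z2 μ) :
    ∀ i : Fin n,
      CondIndepElem μ
        -- X = Z_{2,i}
        (fun ω => Z2 ω i)
        -- Y = (W1, W2, X1^i, X2^i)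
        (fun ω => (W1 ω, W2 ω,
          (fun j : Fin (i.1 + 1) =>
            (TWX C (W1 ω) (W2 ω) (Z1 ω) (Z2 ω)
              ⟨j.1, Nat.lt_of_le_of_lt (Nat.lt_succ_iff.mp j.2) i.2⟩).1),
          (fun j : Fin (i.1 + 1) =>
            (TWX C (W1 ω) (W2 ω) (Z1 ω) (Z2 ω)
              ⟨j.1, Nat.lt_of_le_of_lt (Nat.lt_succ_iff.mp j.2) i.2⟩).2)))
        -- Z = Z2^{i-1}
        (fun ω => (fun j : Fin i.1 => Z2 ω ⟨j.1, j.2.trans i.2⟩)) ∧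
      Hcond μ (fun ω => Z2 ω i)
        (fun ω => ((fun j : Fin i.1 => Z2 ω ⟨j.1, j.2.trans i.2⟩), W1 ω, W2 ω,
          (fun j : Fin (i.1 + 1) =>
            (TWX C (W1 ω) (W2 ω) (Z1 ω) (Z2 ω)
              ⟨j.1, Nat.lt_of_le_of_lt (Nat.lt_succ_iff.mp j.2) i.2⟩).1),
          (fun j : Fin (i.1 + 1) =>
            (TWX C (W1 ω) (W2 ω) (Z1 ω) (Z2 ω)
              ⟨j.1, Nat.lt_of_le_of_lt (Nat.lt_succ_iff.mp j.2) i.2⟩).2))) =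
      Hcond μ (fun ω => Z2 ω i)
        (fun ω => (fun j : Fin i.1 => Z2 ω ⟨j.1, j.2.trans i.2⟩)) :=
  twc_markov_chain_lemma_general μ q n M1 M2 C W1 W2 Z1 Z2 hW1 hW2 hZ1 hZ2 hindep
end
end

section
/- Adaptation helps when the noise components are jointly dependent (Remark 3 identity): let q = 2 and work in ℤ/2ℤ. Let (U_i)_{i≥1} and (Z_{1,i})_{i≥0} be any sequences in ℤ/2ℤ, and set Z_{2,i} = Z_{1,i−1} for i ≥ 1. Define X_{1,0} = 0, Y_{1,0} = 0, X_{2,i} = 0 for all i, and recursively X_{1,i} = U_i + X_{1,i−1} + Y_{1,i−1}, Y_{1,i} = X_{1,i} + X_{2,i} + Z_{1,i}, Y_{2,i} = X_{1,i} + X_{2,i} + Z_{2,i} (addition mod 2). Then Y_{2,i} = U_i for every i ≥ 1; in particular user 2 recovers the information sequence (U_i) with zero error, so the adaptive scheme transmits at rate 1 from user 1 to user 2 while log q − H̄(Z2) = 0 when Z1 is i.i.d. uniform on ℤ/2ℤ. -/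
/-- **Adaptation helps when the noise components are jointly dependent** (Remark 3 identity).
Work in ℤ/2ℤ. Let (U_i)_{i≥1} and (Z_{1,i})_{i≥0} be any binary sequences and set
Z_{2,i} = Z_{1,i−1} for i ≥ 1.  Define X_{1,0} = 0, Y_{1,0} = 0, X_{2,i} = 0 for all i, and
recursively X_{1,i} = U_i + X_{1,i−1} + Y_{1,i−1}, Y_{1,i} = X_{1,i} + X_{2,i} + Z_{1,i},
Y_{2,i} = X_{1,i} + X_{2,i} + Z_{2,i} (addition mod 2).  Then Y_{2,i} = U_i for every
i ≥ 1: user 2 recovers the information sequence (U_i) with zero error, so this adaptive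
scheme transmits at rate 1 from user 1 to user 2. -/
theorem adaptation_helps_dependent_noise
    (U Z1 Z2 X1 X2 Y1 Y2 : ℕ → ZMod 2)
    (hZ2 : ∀ i : ℕ, 1 ≤ i → Z2 i = Z1 (i - 1))
    (hX10 : X1 0 = 0) (hY10 : Y1 0 = 0)
    (hX2 : ∀ i : ℕ, X2 i = 0)
    (hX1 : ∀ i : ℕ, 1 ≤ i → X1 i = U i + X1 (i - 1) + Y1 (i - 1))
    (hY1 : ∀ i : ℕ, Y1 i = X1 i + X2 i + Z1 i)
    (hY2 : ∀ i : ℕ, 1 ≤ i → Y2 i = X1 i + X2 i + Z2 i) :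
    ∀ i : ℕ, 1 ≤ i → Y2 i = U i := by
  intro i hi
  have h2 : ∀ a : ZMod 2, a + a = 0 := fun a => CharTwo.add_self_eq_zero a
  rw [hY2 i hi, hZ2 i hi, hX1 i hi, hY1 (i - 1), hX2, hX2]
  ring_nf
  rw [mul_two, mul_two, h2, h2]
  ring
end

section
/- Markov chain for the R31 converse (equation (3R1)): for any (n, M13, M23, M31, M32) code for the additive-noise MA/DBC with i.i.d. noise processes {Z_{1,i}} and {Z_{2,i}} that are mutually independent, independent of Z3^n and of the messages, for every 1 ≤ i ≤ n the pair (Ỹ_{1,i}, Ỹ_{2,i}) is conditionally independent of W31 given (Ỹ1^{i−1}, Ỹ2^{i−1}, W32, W13, W23, X_{3,i}), where Ỹ_{1,j} = X_{3,j} + Z_{1,j} and Ỹ_{2,j} = X_{3,j} + Z_{1,j} + Z_{2,j}. -/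
open MeasureTheory ProbabilityTheory Real Filter Topology
open scoped ENNReal

noncomputable section

/-- Mutual information I(X ; Y) = H(X) + H(Y) − H(X, Y). -/
def MI {Ω S T : Type*} [MeasurableSpace Ω] [Fintype S] [Fintype T]
    (μ : Measure Ω) (X : Ω → S) (Y : Ω → T) : ℝ :=
  Hent μ X + Hent μ Y - Hent μ (fun ω => (X ω, Y ω))

/-- Conditional mutual information
I(X ; Y | Z) = H(X, Z) + H(Y, Z) − H(X, Y, Z) − H(Z). -/
def CMI {Ω S T U : Type*} [MeasurableSpace Ω] [Fintype S] [Fintype T] [Fintype U]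
    (μ : Measure Ω) (X : Ω → S) (Y : Ω → T) (Z : Ω → U) : ℝ :=
  Hent μ (fun ω => (X ω, Z ω)) + Hent μ (fun ω => (Y ω, Z ω))
    - Hent μ (fun ω => (X ω, Y ω, Z ω)) - Hent μ Z

/-- An (n, M13, M23, M31, M32) code for the multiple access / degraded broadcast channel. -/
structure MACode (q n M13 M23 M31 M32 : ℕ) where
  f1 : Fin M13 → (i : Fin n) → (Fin i.1 → ZMod q) → ZMod q
  f2 : Fin M23 → (i : Fin n) → (Fin i.1 → ZMod q) → ZMod q
  f3 : Fin M31 → Fin M32 → (i : Fin n) → (Fin i.1 → ZMod q) → ZMod q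
  g1 : Fin M13 → (Fin n → ZMod q) → Fin M31
  g2 : Fin M23 → (Fin n → ZMod q) → Fin M32
  g3 : Fin M31 → Fin M32 → (Fin n → ZMod q) → Fin M13 × Fin M23

/-- The triple of channel inputs (X_{1,i}, X_{2,i}, X_{3,i}) produced by the adaptive
encoders, where the past outputs are Y_{1,j} = X_{1,j} + X_{3,j} + Z_{1,j},
Y_{2,j} = X_{2,j} + X_{3,j} + Z_{1,j} + Z_{2,j} and
Y_{3,j} = X_{1,j} + X_{2,j} + X_{3,j} + Z_{3,j} (addition mod q). -/
def MAX {q n M13 M23 M31 M32 : ℕ} (C : MACode q n M13 M23 M31 M32)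
    (w13 : Fin M13) (w23 : Fin M23) (w31 : Fin M31) (w32 : Fin M32)
    (z1 z2 z3 : Fin n → ZMod q) : (i : Fin n) → ZMod q × ZMod q × ZMod q
  | i =>
    (C.f1 w13 i (fun j =>
        have h : j.1 < n := j.2.trans i.2
        (MAX C w13 w23 w31 w32 z1 z2 z3 ⟨j.1, h⟩).1 +
          (MAX C w13 w23 w31 w32 z1 z2 z3 ⟨j.1, h⟩).2.2 + z1 ⟨j.1, h⟩),
     C.f2 w23 i (fun j =>
        have h : j.1 < n := j.2.trans i.2
        (MAX C w13 w23 w31 w32 z1 z2 z3 ⟨j.1, h⟩).2.1 +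
          (MAX C w13 w23 w31 w32 z1 z2 z3 ⟨j.1, h⟩).2.2 + z1 ⟨j.1, h⟩ + z2 ⟨j.1, h⟩),
     C.f3 w31 w32 i (fun j =>
        have h : j.1 < n := j.2.trans i.2
        (MAX C w13 w23 w31 w32 z1 z2 z3 ⟨j.1, h⟩).1 +
          (MAX C w13 w23 w31 w32 z1 z2 z3 ⟨j.1, h⟩).2.1 +
          (MAX C w13 w23 w31 w32 z1 z2 z3 ⟨j.1, h⟩).2.2 + z3 ⟨j.1, h⟩))
  termination_by i => i.1
  decreasing_by all_goals exact j.2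

/-- Output sequence Y_1^n at user 1. -/
def MAY1 {q n M13 M23 M31 M32 : ℕ} (C : MACode q n M13 M23 M31 M32)
    (w13 : Fin M13) (w23 : Fin M23) (w31 : Fin M31) (w32 : Fin M32)
    (z1 z2 z3 : Fin n → ZMod q) (i : Fin n) : ZMod q :=
  (MAX C w13 w23 w31 w32 z1 z2 z3 i).1 + (MAX C w13 w23 w31 w32 z1 z2 z3 i).2.2 + z1 i

/-- Output sequence Y_2^n at user 2. -/
def MAY2 {q n M13 M23 M31 M32 : ℕ} (C : MACode q n M13 M23 M31 M32)
    (w13 : Fin M13) (w23 : Fin M23) (w31 : Fin M31) (w32 : Fin M32)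
    (z1 z2 z3 : Fin n → ZMod q) (i : Fin n) : ZMod q :=
  (MAX C w13 w23 w31 w32 z1 z2 z3 i).2.1 + (MAX C w13 w23 w31 w32 z1 z2 z3 i).2.2 +
    z1 i + z2 i

/-- Output sequence Y_3^n at user 3. -/
def MAY3 {q n M13 M23 M31 M32 : ℕ} (C : MACode q n M13 M23 M31 M32)
    (w13 : Fin M13) (w23 : Fin M23) (w31 : Fin M31) (w32 : Fin M32)
    (z1 z2 z3 : Fin n → ZMod q) (i : Fin n) : ZMod q :=
  (MAX C w13 w23 w31 w32 z1 z2 z3 i).1 + (MAX C w13 w23 w31 w32 z1 z2 z3 i).2.1 +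
    (MAX C w13 w23 w31 w32 z1 z2 z3 i).2.2 + z3 i

/-- The broadcast-direction "clean" output letter Ỹ_{1,j} = X_{3,j} + Z_{1,j}. -/
def tY1 {q n M13 M23 M31 M32 : ℕ} (C : MACode q n M13 M23 M31 M32)
    (w13 : Fin M13) (w23 : Fin M23) (w31 : Fin M31) (w32 : Fin M32)
    (z1 z2 z3 : Fin n → ZMod q) (j : Fin n) : ZMod q :=
  (MAX C w13 w23 w31 w32 z1 z2 z3 j).2.2 + z1 j

/-- The broadcast-direction degraded output letter Ỹ_{2,j} = X_{3,j} + Z_{1,j} + Z_{2,j}. -/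
def tY2 {q n M13 M23 M31 M32 : ℕ} (C : MACode q n M13 M23 M31 M32)
    (w13 : Fin M13) (w23 : Fin M23) (w31 : Fin M31) (w32 : Fin M32)
    (z1 z2 z3 : Fin n → ZMod q) (j : Fin n) : ZMod q :=
  (MAX C w13 w23 w31 w32 z1 z2 z3 j).2.2 + z1 j + z2 j

/-! The letter noise `(Z_{1,i}, Z_{2,i})` is independent of the messages, of `Z3^n` and of the
noise before time `i`. Since the encoders are causal, the conditioning variable and `W31` are
functions of the latter data, while given the conditioning variable (which contains `X_{3,i}`) the
pair `(Ỹ_{1,i}, Ỹ_{2,i})` is a function of the letter noise. -/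

theorem MAX_congr_past {q n M13 M23 M31 M32 : ℕ} (C : MACode q n M13 M23 M31 M32)
    (w13 : Fin M13) (w23 : Fin M23) (w31 : Fin M31) (w32 : Fin M32)
    {z1 z2 z3 z1' z2' z3' : Fin n → ZMod q} (k : Fin n)
    (h1 : ∀ j < k, z1 j = z1' j) (h2 : ∀ j < k, z2 j = z2' j) (h3 : ∀ j < k, z3 j = z3' j) :
    MAX C w13 w23 w31 w32 z1 z2 z3 k = MAX C w13 w23 w31 w32 z1' z2' z3' k := by
  induction k using WellFoundedLT.induction with
  | _ k ih =>
    have hlt : ∀ j : Fin k.1, (⟨j.1, j.2.trans k.2⟩ : Fin n) < k := fun j => j.2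
    have hMAX : ∀ j : Fin k.1, MAX C w13 w23 w31 w32 z1 z2 z3 ⟨j.1, j.2.trans k.2⟩ =
        MAX C w13 w23 w31 w32 z1' z2' z3' ⟨j.1, j.2.trans k.2⟩ := fun j =>
      ih _ (hlt j) (fun m hm => h1 m (hm.trans (hlt j))) (fun m hm => h2 m (hm.trans (hlt j)))
        (fun m hm => h3 m (hm.trans (hlt j)))
    rw [MAX, MAX]
    simp only [hMAX, h1 _ (hlt _), h2 _ (hlt _), h3 _ (hlt _)]

theorem MAX_eq_of_comp_castLE_eq {q n M13 M23 M31 M32 : ℕ} (C : MACode q n M13 M23 M31 M32)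
    (w13 : Fin M13) (w23 : Fin M23) (w31 : Fin M31) (w32 : Fin M32)
    {z1 z2 z1' z2' : Fin n → ZMod q} (z3 : Fin n → ZMod q) {i : Fin n}
    (h1 : z1 ∘ Fin.castLE i.2.le = z1' ∘ Fin.castLE i.2.le)
    (h2 : z2 ∘ Fin.castLE i.2.le = z2' ∘ Fin.castLE i.2.le) {m : Fin n} (hm : m ≤ i) :
    MAX C w13 w23 w31 w32 z1 z2 z3 m = MAX C w13 w23 w31 w32 z1' z2' z3 m :=
  MAX_congr_past C w13 w23 w31 w32 m (fun j hj => congrFun h1 ⟨j, lt_of_lt_of_le hj hm⟩)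
    (fun j hj => congrFun h2 ⟨j, lt_of_lt_of_le hj hm⟩) (fun _ _ => rfl)

namespace ProbabilityTheory

section Independence

variable {Ω α β γ : Type*} [MeasurableSpace Ω] [MeasurableSpace α] [MeasurableSpace β]
  [MeasurableSpace γ] {μ : Measure Ω} {X : Ω → α} {Y : Ω → β} {Z : Ω → γ}

theorem IndepFun.indepFun_prodMk_right [IsFiniteMeasure μ] (hX : Measurable X)
    (hY : Measurable Y) (hZ : Measurable Z) (hXY : IndepFun X Y μ)
    (hXYZ : IndepFun (fun ω => (X ω, Y ω)) Z μ) :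
    IndepFun X (fun ω => (Y ω, Z ω)) μ := by
  have hYZ : IndepFun Y Z μ := hXYZ.comp measurable_snd measurable_id
  rw [indepFun_iff_map_prod_eq_prod_map_map hX.aemeasurable (hY.prodMk hZ).aemeasurable,
    (indepFun_iff_map_prod_eq_prod_map_map hY.aemeasurable hZ.aemeasurable).1 hYZ,
    ← Measure.prodAssoc_prod,
    ← (indepFun_iff_map_prod_eq_prod_map_map hX.aemeasurable hY.aemeasurable).1 hXY,
    ← (indepFun_iff_map_prod_eq_prod_map_map (hX.prodMk hY).aemeasurable hZ.aemeasurable).1 hXYZ,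
    Measure.map_map MeasurableEquiv.prodAssoc.measurable ((hX.prodMk hY).prodMk hZ)]
  rfl

theorem IndepFun.indepFun_prodMk_left [IsFiniteMeasure μ] (hX : Measurable X)
    (hY : Measurable Y) (hZ : Measurable Z) (hYZ : IndepFun Y Z μ)
    (hXYZ : IndepFun X (fun ω => (Y ω, Z ω)) μ) :
    IndepFun (fun ω => (X ω, Y ω)) Z μ := by
  have hXY : IndepFun X Y μ := hXYZ.comp measurable_id measurable_fst
  rw [indepFun_iff_map_prod_eq_prod_map_map (hX.prodMk hY).aemeasurable hZ.aemeasurable,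
    (indepFun_iff_map_prod_eq_prod_map_map hX.aemeasurable hY.aemeasurable).1 hXY]
  apply MeasurableEquiv.prodAssoc.map_measurableEquiv_injective
  rw [Measure.prodAssoc_prod,
    Measure.map_map MeasurableEquiv.prodAssoc.measurable ((hX.prodMk hY).prodMk hZ),
    ← (indepFun_iff_map_prod_eq_prod_map_map hY.aemeasurable hZ.aemeasurable).1 hYZ,
    ← (indepFun_iff_map_prod_eq_prod_map_map hX.aemeasurable (hY.prodMk hZ).aemeasurable).1 hXYZ]
  rfl

theorem iIndepFun.indepFun_apply_castLE {n : ℕ} {f : Fin n → Ω → β} (h : iIndepFun f μ)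
    (hf : ∀ i, Measurable (f i)) (i : Fin n) :
    IndepFun (f i) (fun ω (j : Fin i.1) => f (Fin.castLE i.2.le j) ω) μ := by
  have hdisj : Disjoint {i} (Finset.univ.filter (· < i)) := by simp
  have hpast : Measurable fun (g : (Finset.univ.filter (· < i) : Finset (Fin n)) → β)
      (j : Fin i.1) => g ⟨Fin.castLE i.2.le j, Finset.mem_filter.2 ⟨Finset.mem_univ _, j.2⟩⟩ :=
    measurable_pi_lambda _ fun _ => measurable_pi_apply _
  exact (h.indepFun_finset _ _ hdisj hf).comp
    (measurable_pi_apply ⟨i, Finset.mem_singleton_self i⟩) hpast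

theorem indepFun_apply_prodMk_past [IsFiniteMeasure μ] {n : ℕ} {V₁ V₂ : Ω → Fin n → β}
    {R : Ω → γ} (hV₁ : Measurable V₁) (hV₂ : Measurable V₂) (hR : Measurable R)
    (h₁ : iIndepFun (fun i ω => V₁ ω i) μ) (h₂ : iIndepFun (fun i ω => V₂ ω i) μ)
    (h₁₂ : IndepFun V₁ V₂ μ) (h₁₂R : IndepFun (fun ω => (V₁ ω, V₂ ω)) R μ) (i : Fin n) :
    IndepFun (fun ω => (V₁ ω i, V₂ ω i))
      (fun ω => (V₁ ω ∘ Fin.castLE i.2.le, V₂ ω ∘ Fin.castLE i.2.le, R ω)) μ := by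
  -- `V₁ i ⟂ (past of V₁, V₂, R)` and `V₂ i ⟂ (past of V₂, past of V₁, R)`, glued by
  -- `IndepFun.indepFun_prodMk_left`.
  have hsplit : Measurable fun v : Fin n → β => (v i, v ∘ Fin.castLE i.2.le) := by fun_prop
  have h₁' : IndepFun V₁ (fun ω => (V₂ ω, R ω)) μ :=
    h₁₂.indepFun_prodMk_right hV₁ hV₂ hR h₁₂R
  have h₂' : IndepFun V₂ (fun ω => (V₁ ω, R ω)) μ :=
    h₁₂.symm.indepFun_prodMk_right hV₂ hV₁ hR (h₁₂R.comp measurable_swap measurable_id)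
  have hA := (h₁.indepFun_apply_castLE (fun j => (measurable_pi_apply j).comp hV₁) i
    ).indepFun_prodMk_right (by fun_prop) (by fun_prop) (by fun_prop)
      (h₁'.comp hsplit measurable_id)
  have hB := (h₂.indepFun_apply_castLE (fun j => (measurable_pi_apply j).comp hV₂) i
    ).indepFun_prodMk_right (by fun_prop) (by fun_prop) (by fun_prop)
      (h₂'.comp hsplit (show Measurable fun p : (Fin n → β) × γ =>
        (p.1 ∘ Fin.castLE i.2.le, p.2) by fun_prop))
  exact IndepFun.indepFun_prodMk_left (by fun_prop) (by fun_prop) (by fun_prop)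
    (hB.comp measurable_id (show Measurable fun p : (Fin i.1 → β) × (Fin i.1 → β) × γ =>
      (p.2.1, p.1, p.2.2) by fun_prop))
    (hA.comp measurable_id (show Measurable fun p : (Fin i.1 → β) × (Fin n → β) × γ =>
      (p.2.1 i, p.1, p.2.1 ∘ Fin.castLE i.2.le, p.2.2) by fun_prop))

/- On `{Z = c}` the event `{X = a}` is an event about `V` and `{Y = b}` one about `G`. -/
theorem condIndepElem_of_indepFun [DiscreteMeasurableSpace α] [DiscreteMeasurableSpace β]
    {S T U : Type*} {V : Ω → α} {G : Ω → β} (hVG : IndepFun V G μ) {X : Ω → S} {Y : Ω → T}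
    {Z : Ω → U} (hX : Function.FactorsThrough X fun ω => (V ω, Z ω))
    (hY : Function.FactorsThrough Y G) (hZ : Function.FactorsThrough Z G) :
    CondIndepElem μ X Y Z := by
  intro a b c
  set x := Function.extend (fun ω => (V ω, Z ω)) X fun _ => a
  set y := Function.extend G Y fun _ => b
  set z := Function.extend G Z fun _ => c
  have hZc : Z ⁻¹' {c} = G ⁻¹' {g | z g = c} := by
    ext ω; simp [z, hZ.extend_apply]
  have hYZ : Y ⁻¹' {b} ∩ Z ⁻¹' {c} = G ⁻¹' {g | y g = b ∧ z g = c} := by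
    ext ω; simp [y, z, hY.extend_apply, hZ.extend_apply]
  have hXZ : X ⁻¹' {a} ∩ Z ⁻¹' {c} = V ⁻¹' {v | x (v, c) = a} ∩ Z ⁻¹' {c} := by
    ext ω
    simp only [Set.mem_inter_iff, Set.mem_preimage, Set.mem_singleton_iff]
    constructor <;> rintro ⟨hXa, rfl⟩ <;> simp_all [x, hX.extend_apply]
  rw [Set.inter_right_comm, hXZ, Set.inter_assoc, Set.inter_comm (Z ⁻¹' {c}), hYZ, hZc,
    hVG.measure_inter_preimage_eq_mul _ _ .of_discrete .of_discrete,
    hVG.measure_inter_preimage_eq_mul _ _ .of_discrete .of_discrete]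
  ring

end Independence

end ProbabilityTheory

theorem madbc_r31_markov_chain_general {Ω : Type*} [MeasurableSpace Ω] (μ : Measure Ω)
    [IsProbabilityMeasure μ] (q : ℕ) [NeZero q]
    (n M13 M23 M31 M32 : ℕ) (C : MACode q n M13 M23 M31 M32)
    (W13 : Ω → Fin M13) (W23 : Ω → Fin M23) (W31 : Ω → Fin M31) (W32 : Ω → Fin M32)
    (Z1 Z2 Z3 : Ω → Fin n → ZMod q)
    (hW13 : Measurable W13) (hW23 : Measurable W23)
    (hW31 : Measurable W31) (hW32 : Measurable W32)
    (hZ1 : Measurable Z1) (hZ2 : Measurable Z2) (hZ3 : Measurable Z3)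
    -- {Z_{1,i}} and {Z_{2,i}} are i.i.d. processes
    (hiid1 : iIndepFun (fun i ω => Z1 ω i) μ)
    (hiid2 : iIndepFun (fun i ω => Z2 ω i) μ)
    -- Z1^n and Z2^n are mutually independent ...
    (hindep12 : IndepFun Z1 Z2 μ)
    -- ... and independent of Z3^n and of the messages
    (hindep : IndepFun (fun ω => (Z1 ω, Z2 ω))
      (fun ω => (Z3 ω, W13 ω, W23 ω, W31 ω, W32 ω)) μ) :
    ∀ i : Fin n,
      CondIndepElem μ
        -- X = (Ỹ_{1,i}, Ỹ_{2,i})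
        (fun ω => (tY1 C (W13 ω) (W23 ω) (W31 ω) (W32 ω) (Z1 ω) (Z2 ω) (Z3 ω) i,
                   tY2 C (W13 ω) (W23 ω) (W31 ω) (W32 ω) (Z1 ω) (Z2 ω) (Z3 ω) i))
        -- Y = W31
        W31
        -- Z = (Ỹ1^{i-1}, Ỹ2^{i-1}, W32, W13, W23, X_{3,i})
        (fun ω =>
          ((fun j : Fin i.1 =>
              tY1 C (W13 ω) (W23 ω) (W31 ω) (W32 ω) (Z1 ω) (Z2 ω) (Z3 ω)
                ⟨j.1, j.2.trans i.2⟩),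
           (fun j : Fin i.1 =>
              tY2 C (W13 ω) (W23 ω) (W31 ω) (W32 ω) (Z1 ω) (Z2 ω) (Z3 ω)
                ⟨j.1, j.2.trans i.2⟩),
           W32 ω, W13 ω, W23 ω,
           (MAX C (W13 ω) (W23 ω) (W31 ω) (W32 ω) (Z1 ω) (Z2 ω) (Z3 ω) i).2.2)) := by
  intro i
  have hindep_letter := indepFun_apply_prodMk_past hZ1 hZ2
    (hZ3.prodMk (hW13.prodMk (hW23.prodMk (hW31.prodMk hW32)))) hiid1 hiid2 hindep12 hindep i
  refine condIndepElem_of_indepFun hindep_letter ?_ ?_ ?_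
  · intro ω ω' h
    simp only [Prod.mk.injEq] at h
    obtain ⟨⟨hz1, hz2⟩, -, -, -, -, -, hX3⟩ := h
    simp_all [tY1, tY2]
  · intro ω ω' h
    simp only [Prod.mk.injEq] at h
    exact h.2.2.2.2.2.1
  · intro ω ω' h
    simp only [Prod.mk.injEq] at h
    obtain ⟨hz1, hz2, hz3, h13, h23, h31, h32⟩ := h
    have hMAX {m : Fin n} (hm : m ≤ i) := MAX_eq_of_comp_castLE_eq C (W13 ω') (W23 ω') (W31 ω')
      (W32 ω') (Z3 ω') hz1 hz2 hm
    simp only [tY1, tY2, Prod.mk.injEq, funext_iff, h13, h23, h31, h32, hz3]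
    refine ⟨fun j => ?_, fun j => ?_, trivial, trivial, trivial, by rw [hMAX le_rfl]⟩
    · rw [hMAX j.2.le]
      exact congrArg _ (congrFun hz1 j)
    · rw [hMAX j.2.le, add_assoc, add_assoc]
      exact congrArg _ (congrArg₂ (· + ·) (congrFun hz1 j) (congrFun hz2 j))

/-- **Markov chain for the R31 converse** (equation (3R1)): with {Z_{1,i}} and {Z_{2,i}}
i.i.d., mutually independent, and independent of Z3^n and of the messages, for every time i
(0-based; 1-based time i+1, so 1 ≤ i+1 ≤ n) the pair (Ỹ_{1,i}, Ỹ_{2,i}) is conditionally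
independent of W31 given (Ỹ1^{i−1}, Ỹ2^{i−1}, W32, W13, W23, X_{3,i}), where
Ỹ_{1,j} = X_{3,j} + Z_{1,j} and Ỹ_{2,j} = X_{3,j} + Z_{1,j} + Z_{2,j}. -/
theorem madbc_r31_markov_chain {Ω : Type*} [MeasurableSpace Ω] (μ : Measure Ω)
    [IsProbabilityMeasure μ] (q : ℕ) [NeZero q] (hq : 2 ≤ q)
    (n M13 M23 M31 M32 : ℕ) (C : MACode q n M13 M23 M31 M32)
    (W13 : Ω → Fin M13) (W23 : Ω → Fin M23) (W31 : Ω → Fin M31) (W32 : Ω → Fin M32)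
    (Z1 Z2 Z3 : Ω → Fin n → ZMod q)
    (hW13 : Measurable W13) (hW23 : Measurable W23)
    (hW31 : Measurable W31) (hW32 : Measurable W32)
    (hZ1 : Measurable Z1) (hZ2 : Measurable Z2) (hZ3 : Measurable Z3)
    -- {Z_{1,i}} and {Z_{2,i}} are i.i.d. processes
    (hiid1 : iIndepFun (fun i ω => Z1 ω i) μ)
    (hid1 : ∀ i j : Fin n, IdentDistrib (fun ω => Z1 ω i) (fun ω => Z1 ω j) μ μ)
    (hiid2 : iIndepFun (fun i ω => Z2 ω i) μ)
    (hid2 : ∀ i j : Fin n, IdentDistrib (fun ω => Z2 ω i) (fun ω => Z2 ω j) μ μ)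
    -- Z1^n and Z2^n are mutually independent ...
    (hindep12 : IndepFun Z1 Z2 μ)
    -- ... and independent of Z3^n and of the messages
    (hindep : IndepFun (fun ω => (Z1 ω, Z2 ω))
      (fun ω => (Z3 ω, W13 ω, W23 ω, W31 ω, W32 ω)) μ) :
    ∀ i : Fin n,
      CondIndepElem μ
        -- X = (Ỹ_{1,i}, Ỹ_{2,i})
        (fun ω => (tY1 C (W13 ω) (W23 ω) (W31 ω) (W32 ω) (Z1 ω) (Z2 ω) (Z3 ω) i,
                   tY2 C (W13 ω) (W23 ω) (W31 ω) (W32 ω) (Z1 ω) (Z2 ω) (Z3 ω) i))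
        -- Y = W31
        W31
        -- Z = (Ỹ1^{i-1}, Ỹ2^{i-1}, W32, W13, W23, X_{3,i})
        (fun ω =>
          ((fun j : Fin i.1 =>
              tY1 C (W13 ω) (W23 ω) (W31 ω) (W32 ω) (Z1 ω) (Z2 ω) (Z3 ω)
                ⟨j.1, j.2.trans i.2⟩),
           (fun j : Fin i.1 =>
              tY2 C (W13 ω) (W23 ω) (W31 ω) (W32 ω) (Z1 ω) (Z2 ω) (Z3 ω)
                ⟨j.1, j.2.trans i.2⟩),
           W32 ω, W13 ω, W23 ω,
           (MAX C (W13 ω) (W23 ω) (W31 ω) (W32 ω) (Z1 ω) (Z2 ω) (Z3 ω) i).2.2)) :=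
  madbc_r31_markov_chain_general μ q n M13 M23 M31 M32 C W13 W23 W31 W32 Z1 Z2 Z3 hW13 hW23 hW31
    hW32 hZ1 hZ2 hZ3 hiid1 hiid2 hindep12 hindep

end
end

section
/- Degradedness Markov chain for the R31 converse (equation (3R2)): for any (n, M13, M23, M31, M32) code for the additive-noise MA/DBC with i.i.d. noise processes {Z_{1,i}} and {Z_{2,i}} that are mutually independent, independent of Z3^n and of the messages, for every 1 ≤ i ≤ n the random variable Ỹ_{2,i} is conditionally independent of X_{3,i} given (Ỹ_{1,i}, Ỹ1^{i−1}, Ỹ2^{i−1}, W32, W13, W23), where Ỹ_{1,j} = X_{3,j} + Z_{1,j} and Ỹ_{2,j} = X_{3,j} + Z_{1,j} + Z_{2,j}. -/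
/-!
Since Ỹ_{2,i} = Ỹ_{1,i} + Z_{2,i}, it suffices that Z_{2,i} be independent of the pair
(X_{3,i}, conditioning tuple). By causality of the encoders this pair is a function of
U = (Z_2^{i-1}, Z_1^n, Z_3^n, W13, W23, W31, W32), and Z_{2,i} is independent of U: it is
independent of Z_2^{i-1}, the vector Z_2^n is independent of Z_1^n, and (Z_1^n, Z_2^n) is
independent of the rest. Given the tuple, Ỹ_{2,i} is then a known shift of a noise letter
that is independent of X_{3,i}.
-/

open MeasureTheory ProbabilityTheory Real Filter Topology
open scoped ENNReal

noncomputable section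

namespace ProbabilityTheory

variable {Ω α β γ : Type*} {mΩ : MeasurableSpace Ω} {μ : Measure Ω}
  [MeasurableSpace α] [MeasurableSpace β] [MeasurableSpace γ]

theorem IndepFun.indepFun_prodMk_right_s14 [IsProbabilityMeasure μ] {A : Ω → α} {B : Ω → β}
    {C : Ω → γ} (hA : Measurable A) (hB : Measurable B) (hC : Measurable C)
    (hAB : A ⟂ᵢ[μ] B) (hABC : (fun ω ↦ (A ω, B ω)) ⟂ᵢ[μ] C) :
    A ⟂ᵢ[μ] fun ω ↦ (B ω, C ω) := by
  have hlaw := (indepFun_iff_map_prod_eq_prod_map_map (hA.prodMk hB).aemeasurable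
    hC.aemeasurable).1 hABC
  rw [(indepFun_iff_map_prod_eq_prod_map_map hA.aemeasurable hB.aemeasurable).1 hAB] at hlaw
  have hBC : μ.map (fun ω ↦ (B ω, C ω)) = (μ.map B).prod (μ.map C) := by
    calc μ.map (fun ω ↦ (B ω, C ω))
        = (μ.map fun ω ↦ ((A ω, B ω), C ω)).map (Prod.map Prod.snd id) := by
          rw [Measure.map_map (by fun_prop) (by fun_prop)]; rfl
      _ = (((μ.map A).prod (μ.map B)).map Prod.snd).prod (μ.map C) := by
          rw [hlaw, ← Measure.map_prod_map _ _ measurable_snd measurable_id, Measure.map_id]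
      _ = (μ.map B).prod (μ.map C) := by
          rw [Measure.map_snd_prod, Measure.map_apply hA .univ, Set.preimage_univ, measure_univ,
            one_smul]
  rw [indepFun_iff_map_prod_eq_prod_map_map hA.aemeasurable (hB.prodMk hC).aemeasurable, hBC,
    ← Measure.prodAssoc_prod, ← hlaw, Measure.map_map (by fun_prop) (by fun_prop)]
  rfl

theorem IndepFun.of_factorsThrough [MeasurableSingletonClass β] [Countable β] {A : Ω → α}
    {U : Ω → β} {Y : Ω → γ} (h : A ⟂ᵢ[μ] U) (hY : Function.FactorsThrough Y U) :
    A ⟂ᵢ[μ] Y := by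
  refine indep_of_indep_of_le_right h ?_
  rintro _ ⟨s, -, rfl⟩
  refine ⟨U '' (Y ⁻¹' s), .of_discrete, ?_⟩
  ext ω
  constructor
  · rintro ⟨ω', hω', hU⟩
    rw [Set.mem_preimage, ← hY hU]
    exact hω'
  · exact fun hω ↦ ⟨ω, hω, rfl⟩

theorem iIndepFun.indepFun_restrict_of_notMem {ι : Type*} {f : ι → Ω → β} (h : iIndepFun f μ)
    (hf : ∀ i, Measurable (f i)) {i : ι} {T : Finset ι} (hi : i ∉ T) :
    f i ⟂ᵢ[μ] fun ω (j : T) ↦ f j ω :=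
  (h.indepFun_finset {i} T (Finset.disjoint_singleton_left.2 hi) hf).comp
    (measurable_pi_apply (⟨i, Finset.mem_singleton_self i⟩ : ({i} : Finset ι))) measurable_id

theorem iIndepFun.indepFun_eval_restrict_prodMk [IsProbabilityMeasure μ] {ι : Type*}
    {Z : Ω → ι → β} {A : Ω → α} {V : Ω → γ} (hZ : Measurable Z)
    (hA : Measurable A) (hV : Measurable V) (hiid : iIndepFun (fun i ω ↦ Z ω i) μ)
    (hAZ : A ⟂ᵢ[μ] Z) (hAZV : (fun ω ↦ (A ω, Z ω)) ⟂ᵢ[μ] V) {i : ι} {T : Finset ι}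
    (hi : i ∉ T) :
    (fun ω ↦ Z ω i) ⟂ᵢ[μ] fun ω ↦ (((fun j : T ↦ Z ω j), A ω), V ω) := by
  have hZi : ∀ j, Measurable fun ω ↦ Z ω j := fun j ↦ (measurable_pi_apply j).comp hZ
  have hT : Measurable fun ω (j : T) ↦ Z ω j := measurable_pi_lambda _ fun j ↦ hZi j
  have hpast := hiid.indepFun_restrict_of_notMem hZi hi
  have hZA : (fun ω ↦ (Z ω i, fun j : T ↦ Z ω j)) ⟂ᵢ[μ] A :=
    hAZ.symm.comp (φ := fun z ↦ (z i, fun j : T ↦ z j)) (by fun_prop) measurable_id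
  have hZAV : (fun ω ↦ (Z ω i, (fun j : T ↦ Z ω j), A ω)) ⟂ᵢ[μ] V :=
    hAZV.comp (φ := fun p ↦ (p.2 i, (fun j : T ↦ p.2 j), p.1)) (by fun_prop) measurable_id
  exact (hpast.indepFun_prodMk_right_s14 (hZi i) hT hA hZA).indepFun_prodMk_right_s14 (hZi i)
    (hT.prodMk hA) hV hZAV

end ProbabilityTheory

theorem condIndepElem_of_eq_add_indepFun {Ω β γ G : Type*} {mΩ : MeasurableSpace Ω}
    {μ : Measure Ω} [MeasurableSpace β] [MeasurableSpace γ] [AddGroup G] [MeasurableSpace G]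
    [MeasurableSingletonClass G] [MeasurableSingletonClass β] [MeasurableSingletonClass γ]
    {X N : Ω → G} {Y : Ω → β} {Z : Ω → γ} (k : γ → G) (hX : ∀ ω, X ω = k (Z ω) + N ω)
    (h : N ⟂ᵢ[μ] fun ω ↦ (Y ω, Z ω)) :
    CondIndepElem μ X Y Z := by
  intro a b c
  have hXN : ∀ s : Set (β × γ), s ⊆ Set.univ ×ˢ {c} →
      X ⁻¹' {a} ∩ (fun ω ↦ (Y ω, Z ω)) ⁻¹' s =
        N ⁻¹' {-k c + a} ∩ (fun ω ↦ (Y ω, Z ω)) ⁻¹' s := by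
    intro s hs
    ext ω
    simp only [Set.mem_inter_iff, Set.mem_preimage, Set.mem_singleton_iff, and_congr_left_iff]
    intro hω
    have hc : Z ω = c := (hs hω).2
    rw [hX, hc, eq_neg_add_iff_add_eq]
  have hYZ : Y ⁻¹' {b} ∩ Z ⁻¹' {c} = (fun ω ↦ (Y ω, Z ω)) ⁻¹' {(b, c)} := by
    ext; simp
  have hZ : Z ⁻¹' {c} = (fun ω ↦ (Y ω, Z ω)) ⁻¹' (Set.univ ×ˢ {c}) := by
    ext; simp
  rw [Set.inter_assoc, hYZ, hZ, hXN _ (by simp), hXN _ subset_rfl,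
    h.measure_inter_preimage_eq_mul _ _ (measurableSet_singleton _) (measurableSet_singleton _),
    h.measure_inter_preimage_eq_mul _ _ (measurableSet_singleton _)
      (.prod .univ (measurableSet_singleton _))]
  ring

namespace MACode

variable {q n M13 M23 M31 M32 : ℕ} (C : MACode q n M13 M23 M31 M32)

theorem MAX_eq_of_forall_lt_eq (w13 : Fin M13) (w23 : Fin M23) (w31 : Fin M31) (w32 : Fin M32)
    {z1 z2 z3 z1' z2' z3' : Fin n → ZMod q} (k : Fin n)
    (h : ∀ j < k, z1 j = z1' j ∧ z2 j = z2' j ∧ z3 j = z3' j) :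
    MAX C w13 w23 w31 w32 z1 z2 z3 k = MAX C w13 w23 w31 w32 z1' z2' z3' k := by
  induction k using WellFoundedLT.induction with
  | _ k ih =>
    have hX : ∀ j : Fin k.1, MAX C w13 w23 w31 w32 z1 z2 z3 ⟨j.1, j.2.trans k.2⟩ =
        MAX C w13 w23 w31 w32 z1' z2' z3' ⟨j.1, j.2.trans k.2⟩ :=
      fun j ↦ ih _ j.2 fun m hm ↦ h m (hm.trans j.2)
    have hz : ∀ j : Fin k.1, z1 ⟨j.1, j.2.trans k.2⟩ = z1' ⟨j.1, j.2.trans k.2⟩ ∧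
        z2 ⟨j.1, j.2.trans k.2⟩ = z2' ⟨j.1, j.2.trans k.2⟩ ∧
        z3 ⟨j.1, j.2.trans k.2⟩ = z3' ⟨j.1, j.2.trans k.2⟩ :=
      fun j ↦ h _ j.2
    rw [MAX, MAX]
    simp only [hX, hz]

end MACode

theorem madbc_r31_degraded_markov_chain_general {Ω : Type*} [MeasurableSpace Ω] (μ : Measure Ω)
    [IsProbabilityMeasure μ] (q : ℕ) [NeZero q]
    (n M13 M23 M31 M32 : ℕ) (C : MACode q n M13 M23 M31 M32)
    (W13 : Ω → Fin M13) (W23 : Ω → Fin M23) (W31 : Ω → Fin M31) (W32 : Ω → Fin M32)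
    (Z1 Z2 Z3 : Ω → Fin n → ZMod q)
    (hW13 : Measurable W13) (hW23 : Measurable W23)
    (hW31 : Measurable W31) (hW32 : Measurable W32)
    (hZ1 : Measurable Z1) (hZ2 : Measurable Z2) (hZ3 : Measurable Z3)
    -- {Z_{1,i}} and {Z_{2,i}} are i.i.d. processes
    (hiid2 : iIndepFun (fun i ω => Z2 ω i) μ)
    -- Z1^n and Z2^n are mutually independent ...
    (hindep12 : IndepFun Z1 Z2 μ)
    -- ... and independent of Z3^n and of the messages
    (hindep : IndepFun (fun ω => (Z1 ω, Z2 ω))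
      (fun ω => (Z3 ω, W13 ω, W23 ω, W31 ω, W32 ω)) μ) :
    ∀ i : Fin n,
      CondIndepElem μ
        -- X = Ỹ_{2,i}
        (fun ω => tY2 C (W13 ω) (W23 ω) (W31 ω) (W32 ω) (Z1 ω) (Z2 ω) (Z3 ω) i)
        -- Y = X_{3,i}
        (fun ω => (MAX C (W13 ω) (W23 ω) (W31 ω) (W32 ω) (Z1 ω) (Z2 ω) (Z3 ω) i).2.2)
        -- Z = (Ỹ_{1,i}, Ỹ1^{i-1}, Ỹ2^{i-1}, W32, W13, W23)
        (fun ω =>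
          (tY1 C (W13 ω) (W23 ω) (W31 ω) (W32 ω) (Z1 ω) (Z2 ω) (Z3 ω) i,
           (fun j : Fin i.1 =>
              tY1 C (W13 ω) (W23 ω) (W31 ω) (W32 ω) (Z1 ω) (Z2 ω) (Z3 ω)
                ⟨j.1, j.2.trans i.2⟩),
           (fun j : Fin i.1 =>
              tY2 C (W13 ω) (W23 ω) (W31 ω) (W32 ω) (Z1 ω) (Z2 ω) (Z3 ω)
                ⟨j.1, j.2.trans i.2⟩),
           W32 ω, W13 ω, W23 ω)) := by
  intro i
  have hnoise := hiid2.indepFun_eval_restrict_prodMk hZ2 hZ1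
    (hZ3.prodMk (hW13.prodMk (hW23.prodMk (hW31.prodMk hW32)))) hindep12 hindep
    (Finset.notMem_Iio_self (b := i))
  refine condIndepElem_of_eq_add_indepFun Prod.fst (fun ω ↦ rfl) (hnoise.of_factorsThrough ?_)
  rintro ω ω' hU
  simp only [Prod.mk.injEq, funext_iff, Subtype.forall, Finset.mem_Iio] at hU
  obtain ⟨⟨hZ2past, hZ1eq⟩, hZ3eq, h13, h23, h31, h32⟩ := hU
  have hX : ∀ k ≤ i, MAX C (W13 ω) (W23 ω) (W31 ω) (W32 ω) (Z1 ω) (Z2 ω) (Z3 ω) k =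
      MAX C (W13 ω') (W23 ω') (W31 ω') (W32 ω') (Z1 ω') (Z2 ω') (Z3 ω') k := by
    intro k hk
    rw [h13, h23, h31, h32]
    exact C.MAX_eq_of_forall_lt_eq _ _ _ _ k fun j hj ↦
      ⟨hZ1eq j, hZ2past j (hj.trans_le hk), hZ3eq j⟩
  simp only [tY1, tY2, hX i le_rfl, fun j : Fin i.1 ↦ hX ⟨j.1, j.2.trans i.2⟩ j.2.le]
  simp only [hZ1eq, fun j : Fin i.1 ↦ hZ2past ⟨j.1, j.2.trans i.2⟩ j.2, h13, h23, h32]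

/-- **Degradedness Markov chain for the R31 converse** (equation (3R2)): with {Z_{1,i}}
and {Z_{2,i}} i.i.d., mutually independent, and independent of Z3^n and of the messages,
for every time i (0-based; 1-based time i+1, so 1 ≤ i+1 ≤ n) the degraded output letter
Ỹ_{2,i} is conditionally independent of X_{3,i} given
(Ỹ_{1,i}, Ỹ1^{i−1}, Ỹ2^{i−1}, W32, W13, W23), where Ỹ_{1,j} = X_{3,j} + Z_{1,j} and
Ỹ_{2,j} = X_{3,j} + Z_{1,j} + Z_{2,j}. -/
theorem madbc_r31_degraded_markov_chain {Ω : Type*} [MeasurableSpace Ω] (μ : Measure Ω)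
    [IsProbabilityMeasure μ] (q : ℕ) [NeZero q] (hq : 2 ≤ q)
    (n M13 M23 M31 M32 : ℕ) (C : MACode q n M13 M23 M31 M32)
    (W13 : Ω → Fin M13) (W23 : Ω → Fin M23) (W31 : Ω → Fin M31) (W32 : Ω → Fin M32)
    (Z1 Z2 Z3 : Ω → Fin n → ZMod q)
    (hW13 : Measurable W13) (hW23 : Measurable W23)
    (hW31 : Measurable W31) (hW32 : Measurable W32)
    (hZ1 : Measurable Z1) (hZ2 : Measurable Z2) (hZ3 : Measurable Z3)
    -- {Z_{1,i}} and {Z_{2,i}} are i.i.d. processes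
    (hiid1 : iIndepFun (fun i ω => Z1 ω i) μ)
    (hid1 : ∀ i j : Fin n, IdentDistrib (fun ω => Z1 ω i) (fun ω => Z1 ω j) μ μ)
    (hiid2 : iIndepFun (fun i ω => Z2 ω i) μ)
    (hid2 : ∀ i j : Fin n, IdentDistrib (fun ω => Z2 ω i) (fun ω => Z2 ω j) μ μ)
    -- Z1^n and Z2^n are mutually independent ...
    (hindep12 : IndepFun Z1 Z2 μ)
    -- ... and independent of Z3^n and of the messages
    (hindep : IndepFun (fun ω => (Z1 ω, Z2 ω))
      (fun ω => (Z3 ω, W13 ω, W23 ω, W31 ω, W32 ω)) μ) :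
    ∀ i : Fin n,
      CondIndepElem μ
        -- X = Ỹ_{2,i}
        (fun ω => tY2 C (W13 ω) (W23 ω) (W31 ω) (W32 ω) (Z1 ω) (Z2 ω) (Z3 ω) i)
        -- Y = X_{3,i}
        (fun ω => (MAX C (W13 ω) (W23 ω) (W31 ω) (W32 ω) (Z1 ω) (Z2 ω) (Z3 ω) i).2.2)
        -- Z = (Ỹ_{1,i}, Ỹ1^{i-1}, Ỹ2^{i-1}, W32, W13, W23)
        (fun ω =>
          (tY1 C (W13 ω) (W23 ω) (W31 ω) (W32 ω) (Z1 ω) (Z2 ω) (Z3 ω) i,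
           (fun j : Fin i.1 =>
              tY1 C (W13 ω) (W23 ω) (W31 ω) (W32 ω) (Z1 ω) (Z2 ω) (Z3 ω)
                ⟨j.1, j.2.trans i.2⟩),
           (fun j : Fin i.1 =>
              tY2 C (W13 ω) (W23 ω) (W31 ω) (W32 ω) (Z1 ω) (Z2 ω) (Z3 ω)
                ⟨j.1, j.2.trans i.2⟩),
           W32 ω, W13 ω, W23 ω)) :=
  madbc_r31_degraded_markov_chain_general μ q n M13 M23 M31 M32 C W13 W23 W31 W32 Z1 Z2 Z3 hW13 hW23
    hW31 hW32 hZ1 hZ2 hZ3 hiid2 hindep12 hindep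

end
end

section
/- Single-letterization bound for R32: for any (n, M13, M23, M31, M32) code for the additive-noise MA/DBC with i.i.d. noise processes {Z_{1,i}} and {Z_{2,i}} that are mutually independent, independent of Z3^n and of the messages, one has I(W32; Y2^n | W23) ≤ Σ_{i=1}^n I(U_i; Ỹ_{2,i}), where U_i = (Ỹ1^{i−1}, Ỹ2^{i−1}, W32, W13, W23), Ỹ_{1,j} = X_{3,j} + Z_{1,j} and Ỹ_{2,j} = X_{3,j} + Z_{1,j} + Z_{2,j}. -/
open MeasureTheory ProbabilityTheory Real Filter Topology
open scoped ENNReal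

noncomputable section

/-!
Given `W23`, user 2's input `X_{2,i}` is a function of `W23` and `Y2^{i-1}`, so subtracting it
letter by letter recovers `Ỹ2^n` from `(Y2^n, W23)` and back. Hence
`I(W32; Y2^n | W23) = I(W32; Ỹ2^n | W23) ≤ I(W13, W32, W23; Ỹ2^n)`, the chain rule splits the
right side into `∑ᵢ I(W13, W32, W23; Ỹ_{2,i} | Ỹ2^{i-1})`, and each term is at most `I(Uᵢ; Ỹ_{2,i})`
since enlarging either argument of a mutual information does not decrease it. Nonnegativity of
(conditional) mutual information comes from writing conditional entropy as an average of entropies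
under the conditional laws and applying Jensen's inequality to the concave `t ↦ -t log t`.
-/

theorem Real.sum_negMulLog_sub_negMulLog_sum {ι : Type*} (s : Finset ι) {a : ι → ℝ}
    (ha : ∀ i ∈ s, 0 ≤ a i) :
    ∑ i ∈ s, negMulLog (a i) - negMulLog (∑ i ∈ s, a i) =
      (∑ i ∈ s, a i) * ∑ i ∈ s, negMulLog ((∑ j ∈ s, a j)⁻¹ * a i) := by
  set p := ∑ i ∈ s, a i
  rcases eq_or_ne p 0 with hp | hp
  · have hzero : ∀ i ∈ s, a i = 0 := (Finset.sum_eq_zero_iff_of_nonneg ha).1 hp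
    have : ∑ i ∈ s, negMulLog (a i) = 0 :=
      Finset.sum_eq_zero fun i hi => by rw [hzero i hi, negMulLog_zero]
    simp [hp, this]
  · simp only [negMulLog_mul, Finset.sum_add_distrib, ← Finset.sum_mul, ← Finset.mul_sum]
    simp only [negMulLog, log_inv]
    field_simp
    ring

section Entropy

variable {Ω S T U : Type*} [MeasurableSpace Ω] {μ : Measure Ω} [Fintype S] [Fintype T]
  [Fintype U]

theorem Hent_eq_of_injective {X : Ω → S} {Y : Ω → T} (φ : S → T) (hφ : φ.Injective)
    (h : ∀ ω, Y ω = φ (X ω)) : Hent μ Y = Hent μ X := by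
  obtain rfl : Y = fun ω => φ (X ω) := funext h
  refine (Fintype.sum_of_injective φ hφ _ _ (fun t ht => ?_) fun s => ?_).symm
  · have : (fun ω => φ (X ω)) ⁻¹' {t} = ∅ :=
      Set.eq_empty_of_forall_notMem fun ω hω => ht ⟨X ω, hω⟩
    simp [this]
  · have : (fun ω => φ (X ω)) ⁻¹' {φ s} = X ⁻¹' {s} := Set.ext fun ω => by simp [hφ.eq_iff]
    rw [this]

theorem Hent_of_subsingleton [IsProbabilityMeasure μ] [Subsingleton S] (X : Ω → S) :
    Hent μ X = 0 := by
  rcases isEmpty_or_nonempty S with hS | ⟨⟨s⟩⟩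
  · simp [Hent]
  · have : X ⁻¹' {s} = Set.univ := Set.eq_univ_of_forall fun ω => Subsingleton.elim _ _
    simp [Hent, Fintype.sum_subsingleton _ s, this]

theorem Hent_prod_comm (X : Ω → S) (Y : Ω → T) :
    Hent μ (fun ω => (X ω, Y ω)) = Hent μ (fun ω => (Y ω, X ω)) :=
  Hent_eq_of_injective Prod.swap Prod.swap_injective fun _ => rfl

theorem MI_comm (X : Ω → S) (Y : Ω → T) : MI μ X Y = MI μ Y X := by
  simp only [MI, Hent_prod_comm X Y]
  ring

theorem CMI_comm (X : Ω → S) (Y : Ω → T) (Z : Ω → U) : CMI μ X Y Z = CMI μ Y X Z := by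
  have : Hent μ (fun ω => (X ω, Y ω, Z ω)) = Hent μ (fun ω => (Y ω, X ω, Z ω)) :=
    Hent_eq_of_injective (fun p => (p.2.1, p.1, p.2.2))
      (Function.LeftInverse.injective (g := fun p => (p.2.1, p.1, p.2.2)) fun _ => rfl)
      fun _ => rfl
  simp only [CMI, this]
  ring

theorem MI_comp_right_of_injective {T' : Type*} [Fintype T'] {ψ : T → T'} (hψ : ψ.Injective)
    (X : Ω → S) (Y : Ω → T) : MI μ X (fun ω => ψ (Y ω)) = MI μ X Y := by
  have hpair : Hent μ (fun ω => (X ω, ψ (Y ω))) = Hent μ (fun ω => (X ω, Y ω)) :=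
    Hent_eq_of_injective (Prod.map id ψ) (Function.injective_id.prodMap hψ) fun _ => rfl
  simp only [MI, Hent_eq_of_injective ψ hψ fun _ => rfl, hpair]

theorem MI_comp_left_of_injective {S' : Type*} [Fintype S'] {φ : S → S'} (hφ : φ.Injective)
    (X : Ω → S) (Y : Ω → T) : MI μ (fun ω => φ (X ω)) Y = MI μ X Y := by
  rw [MI_comm, MI_comp_right_of_injective hφ, MI_comm]

theorem CMI_congr_right {T' : Type*} [Fintype T'] {ψ : T × U → T' × U} (hψ : ψ.Injective)
    (X : Ω → S) {Y : Ω → T} {Y' : Ω → T'} (Z : Ω → U)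
    (h : ∀ ω, (Y' ω, Z ω) = ψ (Y ω, Z ω)) : CMI μ X Y' Z = CMI μ X Y Z := by
  have htriple : Hent μ (fun ω => (X ω, Y' ω, Z ω)) = Hent μ (fun ω => (X ω, Y ω, Z ω)) :=
    Hent_eq_of_injective (Prod.map id ψ) (Function.injective_id.prodMap hψ)
      fun ω => congrArg (Prod.mk (X ω)) (h ω)
  simp only [CMI, Hent_eq_of_injective ψ hψ h, htriple]

theorem MI_prod_right (X : Ω → S) (Y : Ω → T) (Z : Ω → U) :
    MI μ X (fun ω => (Y ω, Z ω)) = MI μ X Z + CMI μ X Y Z := by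
  simp only [MI, CMI]
  ring

theorem MI_prod_left (X : Ω → S) (Y : Ω → T) (Z : Ω → U) :
    MI μ (fun ω => (X ω, Z ω)) Y = MI μ Z Y + CMI μ X Y Z := by
  rw [MI_comm, MI_prod_right, MI_comm, CMI_comm]

theorem MI_eq_sum_CMI_take [IsProbabilityMeasure μ] (X : Ω → S) :
    ∀ {n : ℕ} (V : Ω → Fin n → T),
      MI μ X V = ∑ i : Fin n, CMI μ X (fun ω => V ω i) (fun ω => Fin.take i i.2.le (V ω))
  | 0, V => by
    have : Hent μ (fun ω => (X ω, V ω)) = Hent μ X :=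
      Hent_eq_of_injective (fun s => (s, Fin.elim0)) (fun _ _ h => congrArg Prod.fst h)
        fun ω => Prod.ext rfl (Subsingleton.elim _ _)
    simp [MI, Hent_of_subsingleton V, this]
  | n + 1, V => by
    have hsnoc : MI μ X V = MI μ X (fun ω => (V ω (Fin.last n), Fin.init (V ω))) := by
      have hinj : Function.Injective fun v : Fin (n + 1) → T => (v (Fin.last n), Fin.init v) :=
        Function.LeftInverse.injective (g := fun p : T × (Fin n → T) => Fin.snoc p.2 p.1)
          fun v => Fin.snoc_init_self v
      exact (MI_comp_right_of_injective hinj X V).symm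
    rw [hsnoc, MI_prod_right, MI_eq_sum_CMI_take X (fun ω => Fin.init (V ω)),
      Fin.sum_univ_castSucc]
    -- `Fin.take i (Fin.init v) = Fin.take i v` and `Fin.take n v = Fin.init v` hold by `rfl`
    rfl

end Entropy

section Measurable

variable {Ω S T U : Type*} [MeasurableSpace Ω] {μ : Measure Ω}
  [Fintype S] [MeasurableSpace S] [MeasurableSingletonClass S]
  [Fintype T] [MeasurableSpace T] [MeasurableSingletonClass T]
  [Fintype U] [MeasurableSpace U] [MeasurableSingletonClass U]

theorem sum_measureReal_preimage_singleton_inter_s15 [IsFiniteMeasure μ] {Y : Ω → T}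
    (hY : Measurable Y) (A : Set Ω) : ∑ y, μ.real (A ∩ Y ⁻¹' {y}) = μ.real A := by
  have := sum_measureReal_preimage_singleton (μ := μ.restrict A) Finset.univ
    fun y _ => hY (measurableSet_singleton y)
  simpa [measureReal_restrict_apply (hY (measurableSet_singleton _)), Set.inter_comm A]
    using this

theorem Hcond_eq_sum_cond [IsFiniteMeasure μ] {X : Ω → S} {Y : Ω → T} (hX : Measurable X)
    (hY : Measurable Y) :
    Hcond μ X Y = ∑ y, μ.real (Y ⁻¹' {y}) * Hent μ[|Y ⁻¹' {y}] X := by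
  have hpair : ∀ x y, (fun ω => (X ω, Y ω)) ⁻¹' {(x, y)} = Y ⁻¹' {y} ∩ X ⁻¹' {x} :=
    fun x y => Set.ext fun ω => by simp [and_comm]
  have hcond : ∀ x y, (μ[X ⁻¹' {x} | Y ⁻¹' {y}]).toReal =
      (μ.real (Y ⁻¹' {y}))⁻¹ * μ.real (Y ⁻¹' {y} ∩ X ⁻¹' {x}) := by
    intro x y
    rw [cond_apply (hY (measurableSet_singleton y)), ENNReal.toReal_mul, ENNReal.toReal_inv]
    rfl
  have hfib : ∀ y, μ.real (Y ⁻¹' {y}) = ∑ x, μ.real (Y ⁻¹' {y} ∩ X ⁻¹' {x}) := fun y =>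
    (sum_measureReal_preimage_singleton_inter_s15 hX _).symm
  simp only [Hcond, Hent, Fintype.sum_prod_type_right, hpair, hcond, ← measureReal_def, hfib,
    ← Real.sum_negMulLog_sub_negMulLog_sum _ fun _ _ => measureReal_nonneg, Finset.sum_sub_distrib]


theorem Hcond_le_Hent [IsProbabilityMeasure μ] {X : Ω → S} {Y : Ω → T} (hX : Measurable X)
    (hY : Measurable Y) : Hcond μ X Y ≤ Hent μ X := by
  have hweight : ∑ y, μ.real (Y ⁻¹' {y}) = 1 := by
    simpa using sum_measureReal_preimage_singleton_inter_s15 (μ := μ) hY Set.univ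
  have hmix : ∀ x, ∑ y, μ.real (Y ⁻¹' {y}) • (μ[X ⁻¹' {x} | Y ⁻¹' {y}]).toReal =
      μ.real (X ⁻¹' {x}) := fun x => by
    rw [← sum_measureReal_preimage_singleton_inter_s15 hY]
    refine Finset.sum_congr rfl fun y _ => ?_
    rw [smul_eq_mul, mul_comm, measureReal_def, measureReal_def, ← ENNReal.toReal_mul,
      cond_mul_eq_inter (hY (measurableSet_singleton y)), Set.inter_comm]
  rw [Hcond_eq_sum_cond hX hY]
  simp only [Hent, Finset.mul_sum]
  rw [Finset.sum_comm]
  refine Finset.sum_le_sum fun x _ => ?_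
  have := concaveOn_negMulLog.le_map_sum (t := Finset.univ)
    (fun y _ => measureReal_nonneg (μ := μ) (s := Y ⁻¹' {y})) hweight
    fun y _ => ENNReal.toReal_nonneg (a := μ[X ⁻¹' {x} | Y ⁻¹' {y}])
  rw [hmix x] at this
  simp only [smul_eq_mul] at this
  exact this

theorem MI_nonneg [IsProbabilityMeasure μ] {X : Ω → S} {Y : Ω → T} (hX : Measurable X)
    (hY : Measurable Y) : 0 ≤ MI μ X Y := by
  have := Hcond_le_Hent (μ := μ) hX hY
  simp only [MI, Hcond] at this ⊢
  linarith

theorem CMI_eq_sum_cond [IsFiniteMeasure μ] {X : Ω → S} {Y : Ω → T} {Z : Ω → U}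
    (hX : Measurable X) (hY : Measurable Y) (hZ : Measurable Z) :
    CMI μ X Y Z = ∑ z, μ.real (Z ⁻¹' {z}) * MI μ[|Z ⁻¹' {z}] X Y := by
  have hassoc : Hent μ (fun ω => ((X ω, Y ω), Z ω)) = Hent μ (fun ω => (X ω, Y ω, Z ω)) :=
    Hent_eq_of_injective (fun p => ((p.1, p.2.1), p.2.2))
      (Function.LeftInverse.injective (g := fun p => (p.1.1, p.1.2, p.2)) fun _ => rfl)
      fun _ => rfl
  have hsplit : CMI μ X Y Z =
      Hcond μ X Z + Hcond μ Y Z - Hcond μ (fun ω => (X ω, Y ω)) Z := by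
    simp only [CMI, Hcond, hassoc]
    ring
  simp only [hsplit, Hcond_eq_sum_cond hX hZ, Hcond_eq_sum_cond hY hZ,
    Hcond_eq_sum_cond (hX.prodMk hY) hZ, MI, ← Finset.sum_add_distrib, ← Finset.sum_sub_distrib]
  exact Finset.sum_congr rfl fun z _ => by ring

theorem CMI_nonneg [IsFiniteMeasure μ] {X : Ω → S} {Y : Ω → T} {Z : Ω → U}
    (hX : Measurable X) (hY : Measurable Y) (hZ : Measurable Z) : 0 ≤ CMI μ X Y Z := by
  rw [CMI_eq_sum_cond hX hY hZ]
  refine Finset.sum_nonneg fun z _ => ?_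
  rcases eq_or_ne (μ (Z ⁻¹' {z})) 0 with hz | hz
  · simp [measureReal_def, hz]
  · have := cond_isProbabilityMeasure hz
    exact mul_nonneg measureReal_nonneg (MI_nonneg hX hY)

theorem MI_le_MI_prod [IsFiniteMeasure μ] {X : Ω → S} {Y : Ω → T} {Z : Ω → U}
    (hX : Measurable X) (hY : Measurable Y) (hZ : Measurable Z) :
    MI μ Z Y ≤ MI μ (fun ω => (X ω, Z ω)) Y := by
  rw [MI_prod_left]
  linarith [CMI_nonneg (μ := μ) hX hY hZ]

end Measurable

theorem CMI_le_MI_prod {Ω S T U : Type*} [MeasurableSpace Ω] {μ : Measure Ω}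
    [IsProbabilityMeasure μ] [Fintype S] [Fintype T] [MeasurableSpace T]
    [MeasurableSingletonClass T] [Fintype U] [MeasurableSpace U] [MeasurableSingletonClass U]
    (X : Ω → S) {Y : Ω → T} {Z : Ω → U} (hY : Measurable Y) (hZ : Measurable Z) :
    CMI μ X Y Z ≤ MI μ (fun ω => (X ω, Z ω)) Y := by
  rw [MI_prod_left]
  linarith [MI_nonneg (μ := μ) hZ hY]

theorem injective_sub_causal {G : Type*} [AddGroup G] {n : ℕ}
    (f : (i : Fin n) → (Fin i → G) → G) :
    Function.Injective fun (y : Fin n → G) i => y i - f i (Fin.take i i.2.le y) := by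
  intro y y' h
  funext i
  induction i using WellFoundedLT.induction with
  | _ i ih =>
    have hprefix : Fin.take i i.2.le y = Fin.take i i.2.le y' :=
      funext fun j => ih _ (Fin.lt_def.2 j.2)
    have := congrFun h i
    simp only [hprefix] at this
    exact sub_left_inj.1 this

theorem tY2_eq_MAY2_sub {q n M13 M23 M31 M32 : ℕ} (C : MACode q n M13 M23 M31 M32)
    (w13 : Fin M13) (w23 : Fin M23) (w31 : Fin M31) (w32 : Fin M32)
    (z1 z2 z3 : Fin n → ZMod q) (i : Fin n) :
    tY2 C w13 w23 w31 w32 z1 z2 z3 i = MAY2 C w13 w23 w31 w32 z1 z2 z3 i -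
      C.f2 w23 i (Fin.take i i.2.le (MAY2 C w13 w23 w31 w32 z1 z2 z3)) := by
  have hX2 : (MAX C w13 w23 w31 w32 z1 z2 z3 i).2.1 =
      C.f2 w23 i (Fin.take i i.2.le (MAY2 C w13 w23 w31 w32 z1 z2 z3)) := by
    rw [MAX]
    rfl
  rw [MAY2, tY2, hX2]
  ring

theorem CMI_MAY2_eq_CMI_tY2 {Ω S : Type*} [MeasurableSpace Ω] (μ : Measure Ω) [Fintype S]
    {q n M13 M23 M31 M32 : ℕ} [NeZero q] (C : MACode q n M13 M23 M31 M32) (X : Ω → S)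
    (W13 : Ω → Fin M13) (W23 : Ω → Fin M23) (W31 : Ω → Fin M31) (W32 : Ω → Fin M32)
    (Z1 Z2 Z3 : Ω → Fin n → ZMod q) :
    CMI μ X (fun ω => MAY2 C (W13 ω) (W23 ω) (W31 ω) (W32 ω) (Z1 ω) (Z2 ω) (Z3 ω)) W23 =
      CMI μ X (fun ω => tY2 C (W13 ω) (W23 ω) (W31 ω) (W32 ω) (Z1 ω) (Z2 ω) (Z3 ω)) W23 := by
  let decode : (Fin n → ZMod q) × Fin M23 → (Fin n → ZMod q) × Fin M23 :=
    fun p => (fun i => p.1 i - C.f2 p.2 i (Fin.take i i.2.le p.1), p.2)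
  have hdecode : decode.Injective := by
    rintro ⟨y, w⟩ ⟨y', w'⟩ h
    obtain rfl : w = w' := congrArg Prod.snd h
    exact Prod.ext (injective_sub_causal (C.f2 w) (congrArg Prod.fst h)) rfl
  refine (CMI_congr_right hdecode X W23 fun ω => ?_).symm
  exact Prod.ext (funext (tY2_eq_MAY2_sub C _ _ _ _ _ _ _)) rfl

theorem madbc_r32_single_letterization_general {Ω : Type*} [MeasurableSpace Ω] (μ : Measure Ω)
    [IsProbabilityMeasure μ] (q : ℕ) [NeZero q]
    (n M13 M23 M31 M32 : ℕ) (C : MACode q n M13 M23 M31 M32)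
    (W13 : Ω → Fin M13) (W23 : Ω → Fin M23) (W31 : Ω → Fin M31) (W32 : Ω → Fin M32)
    (Z1 Z2 Z3 : Ω → Fin n → ZMod q)
    (hW13 : Measurable W13) (hW23 : Measurable W23)
    (hW31 : Measurable W31) (hW32 : Measurable W32)
    (hZ1 : Measurable Z1) (hZ2 : Measurable Z2) (hZ3 : Measurable Z3) :
    CMI μ W32
      (fun ω => (fun i : Fin n =>
        MAY2 C (W13 ω) (W23 ω) (W31 ω) (W32 ω) (Z1 ω) (Z2 ω) (Z3 ω) i))
      W23 ≤
    ∑ i : Fin n,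
      MI μ
        -- U_i = (Yt1^{i-1}, Yt2^{i-1}, W32, W13, W23)
        (fun ω =>
          ((fun j : Fin i.1 =>
              tY1 C (W13 ω) (W23 ω) (W31 ω) (W32 ω) (Z1 ω) (Z2 ω) (Z3 ω)
                ⟨j.1, j.2.trans i.2⟩),
           (fun j : Fin i.1 =>
              tY2 C (W13 ω) (W23 ω) (W31 ω) (W32 ω) (Z1 ω) (Z2 ω) (Z3 ω)
                ⟨j.1, j.2.trans i.2⟩),
           W32 ω, W13 ω, W23 ω))
        -- Ỹ_{2,i}
        (fun ω => tY2 C (W13 ω) (W23 ω) (W31 ω) (W32 ω) (Z1 ω) (Z2 ω) (Z3 ω) i) := by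
  set Yt1 : Ω → Fin n → ZMod q :=
    fun ω => tY1 C (W13 ω) (W23 ω) (W31 ω) (W32 ω) (Z1 ω) (Z2 ω) (Z3 ω)
  set Yt2 : Ω → Fin n → ZMod q :=
    fun ω => tY2 C (W13 ω) (W23 ω) (W31 ω) (W32 ω) (Z1 ω) (Z2 ω) (Z3 ω)
  have hYt1 : Measurable Yt1 := by fun_prop (disch := exact measurable_of_countable _)
  have hYt2 : Measurable Yt2 := by fun_prop (disch := exact measurable_of_countable _)
  have hletter : ∀ i, Measurable fun ω => Yt2 ω i := fun i => (measurable_pi_apply i).comp hYt2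
  have htake : ∀ {V : Ω → Fin n → ZMod q}, Measurable V → ∀ i : Fin n,
      Measurable fun ω => Fin.take i i.2.le (V ω) :=
    fun hV i => (measurable_of_countable (Fin.take i i.2.le)).comp hV
  have hW : Measurable fun ω => (W13 ω, W32 ω, W23 ω) := hW13.prodMk (hW32.prodMk hW23)
  calc _ = CMI μ W32 Yt2 W23 := CMI_MAY2_eq_CMI_tY2 μ C W32 W13 W23 W31 W32 Z1 Z2 Z3
    _ ≤ MI μ (fun ω => (W32 ω, W23 ω)) Yt2 := CMI_le_MI_prod _ hYt2 hW23
    _ ≤ MI μ (fun ω => (W13 ω, W32 ω, W23 ω)) Yt2 := MI_le_MI_prod hW13 hYt2 (hW32.prodMk hW23)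
    _ = ∑ i : Fin n, CMI μ (fun ω => (W13 ω, W32 ω, W23 ω)) (fun ω => Yt2 ω i)
          (fun ω => Fin.take i i.2.le (Yt2 ω)) := MI_eq_sum_CMI_take _ _
    _ ≤ ∑ i : Fin n, MI μ (fun ω => (Fin.take i i.2.le (Yt1 ω), (W13 ω, W32 ω, W23 ω),
          Fin.take i i.2.le (Yt2 ω))) (fun ω => Yt2 ω i) :=
        Finset.sum_le_sum fun i _ => (CMI_le_MI_prod _ (hletter i) (htake hYt2 i)).trans
          (MI_le_MI_prod (htake hYt1 i) (hletter i) (hW.prodMk (htake hYt2 i)))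
    _ = _ := Finset.sum_congr rfl fun i _ => (MI_comp_left_of_injective
        (φ := fun p => (p.1, p.2.2, p.2.1.2.1, p.2.1.1, p.2.1.2.2))
        (Function.LeftInverse.injective
          (g := fun p => (p.1, (p.2.2.2.1, p.2.2.1, p.2.2.2.2), p.2.1)) fun _ => rfl) _ _).symm

/-- **Single-letterization bound for R32**: with {Z_{1,i}} and {Z_{2,i}} i.i.d., mutually
independent, and independent of Z3^n and of the messages,
I(W32; Y2^n | W23) ≤ Σ_{i=1}^n I(U_i; Ỹ_{2,i}), where
U_i = (Ỹ1^{i−1}, Ỹ2^{i−1}, W32, W13, W23), Ỹ_{1,j} = X_{3,j} + Z_{1,j} and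
Ỹ_{2,j} = X_{3,j} + Z_{1,j} + Z_{2,j}. -/
theorem madbc_r32_single_letterization {Ω : Type*} [MeasurableSpace Ω] (μ : Measure Ω)
    [IsProbabilityMeasure μ] (q : ℕ) [NeZero q] (hq : 2 ≤ q)
    (n M13 M23 M31 M32 : ℕ) (C : MACode q n M13 M23 M31 M32)
    (W13 : Ω → Fin M13) (W23 : Ω → Fin M23) (W31 : Ω → Fin M31) (W32 : Ω → Fin M32)
    (Z1 Z2 Z3 : Ω → Fin n → ZMod q)
    (hW13 : Measurable W13) (hW23 : Measurable W23)
    (hW31 : Measurable W31) (hW32 : Measurable W32)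
    (hZ1 : Measurable Z1) (hZ2 : Measurable Z2) (hZ3 : Measurable Z3)
    -- {Z_{1,i}} and {Z_{2,i}} are i.i.d. processes
    (hiid1 : iIndepFun (fun i ω => Z1 ω i) μ)
    (hid1 : ∀ i j : Fin n, IdentDistrib (fun ω => Z1 ω i) (fun ω => Z1 ω j) μ μ)
    (hiid2 : iIndepFun (fun i ω => Z2 ω i) μ)
    (hid2 : ∀ i j : Fin n, IdentDistrib (fun ω => Z2 ω i) (fun ω => Z2 ω j) μ μ)
    -- Z1^n and Z2^n are mutually independent ...
    (hindep12 : IndepFun Z1 Z2 μ)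
    -- ... and independent of Z3^n and of the messages
    (hindep : IndepFun (fun ω => (Z1 ω, Z2 ω))
      (fun ω => (Z3 ω, W13 ω, W23 ω, W31 ω, W32 ω)) μ) :
    CMI μ W32
      (fun ω => (fun i : Fin n =>
        MAY2 C (W13 ω) (W23 ω) (W31 ω) (W32 ω) (Z1 ω) (Z2 ω) (Z3 ω) i))
      W23 ≤
    ∑ i : Fin n,
      MI μ
        -- U_i = (Ỹ1^{i-1}, Ỹ2^{i-1}, W32, W13, W23)
        (fun ω =>
          ((fun j : Fin i.1 =>
              tY1 C (W13 ω) (W23 ω) (W31 ω) (W32 ω) (Z1 ω) (Z2 ω) (Z3 ω)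
                ⟨j.1, j.2.trans i.2⟩),
           (fun j : Fin i.1 =>
              tY2 C (W13 ω) (W23 ω) (W31 ω) (W32 ω) (Z1 ω) (Z2 ω) (Z3 ω)
                ⟨j.1, j.2.trans i.2⟩),
           W32 ω, W13 ω, W23 ω))
        -- Ỹ_{2,i}
        (fun ω => tY2 C (W13 ω) (W23 ω) (W31 ω) (W32 ω) (Z1 ω) (Z2 ω) (Z3 ω) i) :=
  madbc_r32_single_letterization_general μ q n M13 M23 M31 M32 C W13 W23 W31 W32 Z1 Z2 Z3 hW13 hW23
    hW31 hW32 hZ1 hZ2 hZ3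
end
end
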